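/- arXiv:2006.07677 — 7 statements merged into one kernel-verified Lean document; each statement's English description precedes it below -/
import Mathlib

section
/- Let n = 2^k for a positive integer k. Then the total chromatic number of the unitary Cayley graph U_n equals φ(2^k) + 2 = 2^{k-1} + 2. -/
/-- A total coloring of a simple graph `G` with colors in `Fin k`: adjacent vertices get
distinct colors, edges sharing an endpoint get distinct colors, and each edge gets a color
distinct from the colors of both its endpoints. -/
def IsTotalColoring {V : Type*} (G : SimpleGraph V) {k : ℕ}
    (cV : V → Fin k) (cE : G.edgeSet → Fin k) : Prop :=
  (∀ u v : V, G.Adj u v → cV u ≠ cV v) ∧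
  (∀ e f : G.edgeSet, e ≠ f → (∃ x, x ∈ (e : Sym2 V) ∧ x ∈ (f : Sym2 V)) → cE e ≠ cE f) ∧
  (∀ (e : G.edgeSet) (v : V), v ∈ (e : Sym2 V) → cE e ≠ cV v)

/-- The total chromatic number: the least `k` admitting a total coloring with `k` colors. -/
noncomputable def totalChromaticNumber {V : Type*} (G : SimpleGraph V) : ℕ :=
  sInf {k | ∃ (cV : V → Fin k) (cE : G.edgeSet → Fin k), IsTotalColoring G cV cE}

/-- The unitary Cayley graph `U n` on `ZMod n`: `u` and `v` are adjacent iff `u ≠ v` and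
`u - v` is a unit of `ZMod n` (equivalently, `gcd(u - v, n) = 1`). -/
def unitaryCayleyGraph (n : ℕ) : SimpleGraph (ZMod n) :=
  SimpleGraph.fromRel (fun u v => IsUnit (u - v))

/-!
For `n = 2 ^ k` with `k > 0`, two residues are adjacent in `U_n` iff their difference is odd, so
`U_n` is `φ n`-regular, triangle-free, and has `2 φ n` vertices.

Upper bound: colour even vertices `φ n`, odd vertices `φ n + 1`, and an edge `uv` by
`⌊(u + v) / 2⌋`; here `u + v` is odd, so these are colours below `φ n`, and at a fixed endpoint
the sum determines the other endpoint.

Lower bound: in a total colouring of a `d`-regular graph with `d + 1` colours every vertex sees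
every colour. The edges coloured like a vertex `a` form a matching avoiding `a` that covers each
of the `d` neighbours of `a`; without triangles it matches them into the complement of
`{a} ∪ N(a)`, forcing `2 d + 1` vertices.
-/

open Function

namespace IsTotalColoring

variable {V : Type*} {G : SimpleGraph V} {N : ℕ} {cV : V → Fin N} {cE : G.edgeSet → Fin N}

/-- The colours seen at `v`: `none` stands for `v` itself, `some w` for the edge `vw`. -/
def incidentColor (cV : V → Fin N) (cE : G.edgeSet → Fin N) (v : V) :
    Option (G.neighborSet v) → Fin N
  | none => cV v
  | some w => cE ⟨s(v, w), w.2⟩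

theorem injective_incidentColor (h : IsTotalColoring G cV cE) (v : V) :
    Injective (incidentColor cV cE v) := by
  rintro (_ | ⟨w, hw⟩) (_ | ⟨w', hw'⟩) hc
  · rfl
  · exact (h.2.2 _ v (Sym2.mem_mk_left _ _) hc.symm).elim
  · exact (h.2.2 _ v (Sym2.mem_mk_left _ _) hc).elim
  · by_contra hne
    refine h.2.1 _ _ (fun he => hne ?_) ⟨v, Sym2.mem_mk_left _ _, Sym2.mem_mk_left _ _⟩ hc
    cases Sym2.congr_right.1 (congrArg Subtype.val he)
    rfl

theorem degree_add_one_le (h : IsTotalColoring G cV cE) (v : V) [Fintype (G.neighborSet v)] :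
    G.degree v + 1 ≤ N := by
  simpa [← G.card_neighborSet_eq_degree] using
    Fintype.card_le_of_injective _ (h.injective_incidentColor v)

theorem exists_adj_color_eq (h : IsTotalColoring G cV cE) {v : V} [Fintype (G.neighborSet v)]
    (hv : G.degree v + 1 = N) {c : Fin N} (hc : c ≠ cV v) :
    ∃ w, ∃ hw : G.Adj v w, cE ⟨s(v, w), hw⟩ = c := by
  have hbij : Bijective (incidentColor cV cE v) :=
    (Fintype.bijective_iff_injective_and_card _).2
      ⟨h.injective_incidentColor v, by simp [G.card_neighborSet_eq_degree, hv]⟩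
  obtain ⟨_ | ⟨w, hw⟩, hwc⟩ := hbij.2 c
  · exact (hc hwc.symm).elim
  · exact ⟨w, hw, hwc⟩

theorem two_mul_add_one_le_card [Fintype V] [DecidableRel G.Adj] (h : IsTotalColoring G cV cE)
    {d : ℕ} (hreg : G.IsRegularOfDegree d) (htri : G.CliqueFree 3) (hN : d + 1 = N) (a : V) :
    2 * d + 1 ≤ Fintype.card V := by
  classical
  have hmatch (b : G.neighborSet a) : ∃ w, ∃ hw : G.Adj b w, cE ⟨s(b, w), hw⟩ = cV a :=
    h.exists_adj_color_eq (hreg.degree_eq b ▸ hN) (h.1 a b b.2)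
  choose g hgadj hgc using hmatch
  set t : Finset V := (insert a (G.neighborFinset a))ᶜ
  have hgt (b : G.neighborSet a) : g b ∈ t := by
    have hga : g b ≠ a := by
      rintro hg
      exact h.2.2 _ a (by simp [hg]) (hgc b)
    have hnadj : ¬ G.Adj a (g b) := fun hag =>
      htri _ (G.is3Clique_triple_iff.2 ⟨b.2, hag, hgadj b⟩)
    simp [t, hga, hnadj]
  have hinj : Injective fun b => (⟨g b, hgt b⟩ : t) := by
    intro b b' hbb'
    have hg : g b = g b' := congrArg Subtype.val hbb'
    by_contra hne
    refine h.2.1 _ _ (fun he => hne ?_) ⟨g b, Sym2.mem_mk_right _ _, by simp [hg]⟩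
      ((hgc b).trans (hgc b').symm)
    have hsym : s((b : V), g b) = s((b' : V), g b') := congrArg Subtype.val he
    rw [hg] at hsym
    exact Subtype.ext (Sym2.congr_left.1 hsym)
  have hcard := Fintype.card_le_of_injective _ hinj
  rw [Fintype.card_coe, Finset.card_compl, Finset.card_insert_of_notMem
    (G.notMem_neighborFinset_self a), G.card_neighborFinset_eq_degree,
    G.card_neighborSet_eq_degree] at hcard
  simp only [hreg.degree_eq] at hcard
  have := Fintype.card_pos_iff.2 ⟨a⟩
  omega

theorem add_two_le [Fintype V] [DecidableRel G.Adj] [Nonempty V] (h : IsTotalColoring G cV cE)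
    {d : ℕ} (hreg : G.IsRegularOfDegree d) (htri : G.CliqueFree 3)
    (hcard : Fintype.card V ≤ 2 * d) : d + 2 ≤ N := by
  inhabit V
  have hd := hreg.degree_eq default ▸ h.degree_add_one_le default
  by_contra! hN
  have := h.two_mul_add_one_le_card hreg htri (by omega) default
  omega

end IsTotalColoring

theorem totalChromaticNumber_eq {V : Type*} {G : SimpleGraph V} {k : ℕ}
    (hex : ∃ (cV : V → Fin k) (cE : G.edgeSet → Fin k), IsTotalColoring G cV cE)
    (hle : ∀ (N : ℕ) (cV : V → Fin N) (cE : G.edgeSet → Fin N),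
      IsTotalColoring G cV cE → k ≤ N) :
    totalChromaticNumber G = k :=
  le_antisymm (Nat.sInf_le hex) (le_csInf ⟨k, hex⟩ fun N ⟨cV, cE, h⟩ => hle N cV cE h)

section unitaryCayleyGraph

variable {n : ℕ}

theorem unitaryCayleyGraph_adj [Nontrivial (ZMod n)] {u v : ZMod n} :
    (unitaryCayleyGraph n).Adj u v ↔ IsUnit (u - v) := by
  rw [unitaryCayleyGraph, SimpleGraph.fromRel_adj, ← neg_sub u v, IsUnit.neg_iff, or_self]
  refine and_iff_right_of_imp fun h huv => ?_
  simp [huv] at h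

theorem unitaryCayleyGraph_isRegularOfDegree (n : ℕ) [NeZero n] [Nontrivial (ZMod n)]
    [DecidableRel (unitaryCayleyGraph n).Adj] :
    (unitaryCayleyGraph n).IsRegularOfDegree (Nat.totient n) := by
  intro v
  rw [← SimpleGraph.card_neighborSet_eq_degree, ← ZMod.card_units_eq_totient]
  exact Fintype.card_congr
    { toFun w := (unitaryCayleyGraph_adj.1 w.2).unit
      invFun u := ⟨v - u, unitaryCayleyGraph_adj.2 (by simp)⟩
      left_inv w := by ext; simp
      right_inv u := by ext; simp }

section parity

variable (hn : 2 ∣ n) {u v : ZMod n}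

theorem castHom_two_sub_eq_one_of_adj (h : (unitaryCayleyGraph n).Adj u v) :
    ZMod.castHom hn (ZMod 2) (u - v) = 1 := by
  have hunit : ∀ x : ZMod 2, IsUnit x → x = 1 := by decide
  rcases h.2 with h | h
  · exact hunit _ (h.map _)
  · rw [← neg_sub, map_neg, hunit _ (h.map _)]
    rfl

theorem castHom_two_add_eq_one_of_adj (h : (unitaryCayleyGraph n).Adj u v) :
    ZMod.castHom hn (ZMod 2) (u + v) = 1 := by
  rw [map_add, ← ZMod.neg_eq_self_mod_two (ZMod.castHom hn (ZMod 2) v), ← sub_eq_add_neg,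
    ← map_sub, castHom_two_sub_eq_one_of_adj hn h]

theorem castHom_two_ne_of_adj (h : (unitaryCayleyGraph n).Adj u v) :
    ZMod.castHom hn (ZMod 2) u ≠ ZMod.castHom hn (ZMod 2) v := by
  intro huv
  have := castHom_two_sub_eq_one_of_adj hn h
  rw [map_sub, huv, sub_self] at this
  exact zero_ne_one this

end parity

theorem unitaryCayleyGraph_cliqueFree_three (hn : 2 ∣ n) :
    (unitaryCayleyGraph n).CliqueFree 3 := by
  intro s hs
  obtain ⟨a, b, c, hab, hac, hbc, rfl⟩ := SimpleGraph.is3Clique_iff.1 hs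
  have := congrArg (ZMod.castHom hn (ZMod 2)) (sub_add_sub_cancel a b c)
  rw [map_add, castHom_two_sub_eq_one_of_adj hn hab, castHom_two_sub_eq_one_of_adj hn hbc,
    castHom_two_sub_eq_one_of_adj hn hac] at this
  exact absurd this (by decide)

theorem exists_isTotalColoring_unitaryCayleyGraph_two_mul (m : ℕ) [NeZero m] :
    ∃ (cV : ZMod (2 * m) → Fin (m + 2))
      (cE : (unitaryCayleyGraph (2 * m)).edgeSet → Fin (m + 2)),
      IsTotalColoring (unitaryCayleyGraph (2 * m)) cV cE := by
  have hn : 2 ∣ 2 * m := dvd_mul_right 2 m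
  have hp (x : ZMod (2 * m)) : (ZMod.castHom hn (ZMod 2) x).val = x.val % 2 := by
    rw [ZMod.castHom_apply, ZMod.cast_eq_val, ZMod.val_natCast]
  have hpar {x y : ZMod (2 * m)} (h : (unitaryCayleyGraph (2 * m)).Adj x y) :
      x.val % 2 ≠ y.val % 2 := by
    rw [← hp, ← hp]
    exact fun hxy => castHom_two_ne_of_adj hn h (ZMod.val_injective _ hxy)
  have hsum {x y : ZMod (2 * m)} (h : (unitaryCayleyGraph (2 * m)).Adj x y) :
      (x + y).val % 2 = 1 := by
    rw [← hp, castHom_two_add_eq_one_of_adj hn h]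
    rfl
  refine ⟨fun x => ⟨m + x.val % 2, by omega⟩,
    fun e => ⟨(Sym2.lift ⟨(· + ·), add_comm⟩ e.1 : ZMod (2 * m)).val / 2,
      by have := ZMod.val_lt (Sym2.lift ⟨(· + ·), add_comm⟩ e.1 : ZMod (2 * m)); omega⟩,
    ?_, ?_, ?_⟩
  · intro u v h hc
    have huv : m + u.val % 2 = m + v.val % 2 := congrArg Fin.val hc
    exact hpar h (by omega)
  · rintro ⟨e, he⟩ ⟨f, hf⟩ hne ⟨x, hxe, hxf⟩ hc
    obtain ⟨y, rfl⟩ := Sym2.mem_iff_exists.1 hxe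
    obtain ⟨z, rfl⟩ := Sym2.mem_iff_exists.1 hxf
    have hxy := hsum ((SimpleGraph.mem_edgeSet _).1 he)
    have hxz := hsum ((SimpleGraph.mem_edgeSet _).1 hf)
    replace hc : (x + y).val / 2 = (x + z).val / 2 := congrArg Fin.val hc
    have hyz : y = z := add_left_cancel (a := x) (ZMod.val_injective _ (by omega))
    subst hyz
    exact hne rfl
  · rintro ⟨e, he⟩ x hxe hc
    obtain ⟨y, rfl⟩ := Sym2.mem_iff_exists.1 hxe
    replace hc : (x + y).val / 2 = m + x.val % 2 := congrArg Fin.val hc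
    have := (x + y).val_lt
    omega

end unitaryCayleyGraph

theorem totalChromaticNumber_unitaryCayleyGraph_two_pow (k : ℕ) (hk : 0 < k) :
    totalChromaticNumber (unitaryCayleyGraph (2 ^ k)) = Nat.totient (2 ^ k) + 2 ∧
    Nat.totient (2 ^ k) + 2 = 2 ^ (k - 1) + 2 := by
  obtain ⟨m, rfl⟩ : ∃ m, k = m + 1 := ⟨k - 1, by omega⟩
  have htot : Nat.totient (2 * 2 ^ m) = 2 ^ m := by
    rw [← pow_succ', Nat.totient_prime_pow_succ Nat.prime_two, Nat.add_one_sub_one, mul_one]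
  refine ⟨?_, by rw [pow_succ', htot, Nat.add_sub_cancel]⟩
  rw [pow_succ', htot]
  have : Fact (1 < 2 * 2 ^ m) := ⟨by have := Nat.one_le_two_pow (n := m); omega⟩
  classical
  have hreg := unitaryCayleyGraph_isRegularOfDegree (2 * 2 ^ m)
  rw [htot] at hreg
  exact totalChromaticNumber_eq (exists_isTotalColoring_unitaryCayleyGraph_two_mul _)
    fun N cV cE h => h.add_two_le hreg
      (unitaryCayleyGraph_cliqueFree_three (dvd_mul_right 2 _)) (ZMod.card _).le
end

section
/- For every positive integer m, the total chromatic number of the complete bipartite graph K_{m,m} equals m + 2. -/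
private def edg (m : ℕ) (a b : Fin m) : (completeBipartiteGraph (Fin m) (Fin m)).edgeSet :=
  ⟨s(Sum.inl a, Sum.inr b), by simp⟩

private lemma edg_inj {m : ℕ} {a b a' b' : Fin m} (h : edg m a b = edg m a' b') :
    a = a' ∧ b = b' := by
  have := congrArg Subtype.val h
  simpa [edg] using this

private lemma edge_repr {m : ℕ} (e : (completeBipartiteGraph (Fin m) (Fin m)).edgeSet) :
    ∃ a b : Fin m, e = edg m a b := by
  obtain ⟨s, hs⟩ := e
  induction s using Sym2.ind with
  | _ v w =>
    rw [SimpleGraph.mem_edgeSet] at hs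
    rcases v with a | a <;> rcases w with b | b <;> simp at hs
    · exact ⟨a, b, rfl⟩
    · exact ⟨b, a, Subtype.ext Sym2.eq_swap⟩

private def upcV (m : ℕ) : Fin m ⊕ Fin m → Fin (m + 2) :=
  Sum.elim (fun _ => ⟨m, by omega⟩) (fun _ => ⟨m + 1, by omega⟩)

private def upcE (m : ℕ) (hm : 0 < m)
    (e : (completeBipartiteGraph (Fin m) (Fin m)).edgeSet) : Fin (m + 2) :=
  ⟨(Sym2.lift ⟨fun v w => Sum.elim Fin.val Fin.val v + Sum.elim Fin.val Fin.val w,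
      fun v w => by simp [Nat.add_comm]⟩ e.1) % m, by
    have := Nat.mod_lt (Sym2.lift ⟨fun v w => Sum.elim Fin.val Fin.val v + Sum.elim Fin.val Fin.val w,
      fun v w => by simp [Nat.add_comm]⟩ e.1) hm
    omega⟩

private lemma upcE_edg (m : ℕ) (hm : 0 < m) (a b : Fin m) :
    (upcE m hm (edg m a b)).val = (a.val + b.val) % m := rfl

private lemma upper (m : ℕ) (hm : 0 < m) :
    ∃ (cV : Fin m ⊕ Fin m → Fin (m + 2))
      (cE : (completeBipartiteGraph (Fin m) (Fin m)).edgeSet → Fin (m + 2)),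
      IsTotalColoring (completeBipartiteGraph (Fin m) (Fin m)) cV cE := by
  refine ⟨upcV m, upcE m hm, ?_, ?_, ?_⟩
  · rintro (a | a) (b | b) hadj <;> simp_all [upcV]
  · intro e f hef hx heq
    obtain ⟨a, b, rfl⟩ := edge_repr e
    obtain ⟨a', b', rfl⟩ := edge_repr f
    obtain ⟨x, hx1, hx2⟩ := hx
    have heq' : (a.val + b.val) % m = (a'.val + b'.val) % m := by
      have := congrArg Fin.val heq
      simpa [upcE_edg] using this
    simp only [edg, Sym2.mem_iff] at hx1 hx2
    have key : (a = a' ∧ b ≠ b') ∨ (b = b' ∧ a ≠ a') := by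
      rcases hx1 with rfl | rfl
      · rcases hx2 with h2 | h2
        · obtain rfl : a = a' := Sum.inl.inj h2
          exact Or.inl ⟨rfl, fun hb => hef (by rw [hb])⟩
        · exact absurd h2 (by simp)
      · rcases hx2 with h2 | h2
        · exact absurd h2 (by simp)
        · obtain rfl : b = b' := Sum.inr.inj h2
          exact Or.inr ⟨rfl, fun ha => hef (by rw [ha])⟩
    rcases key with ⟨rfl, hbb⟩ | ⟨rfl, haa⟩
    · exact hbb (Fin.ext (by
        have : b.val % m = b'.val % m := Nat.ModEq.add_left_cancel' a.val heq'
        rwa [Nat.mod_eq_of_lt b.isLt, Nat.mod_eq_of_lt b'.isLt] at this))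
    · exact haa (Fin.ext (by
        have h2 : (b.val + a.val) % m = (b.val + a'.val) % m := by
          rw [Nat.add_comm b.val a.val, Nat.add_comm b.val a'.val]; exact heq'
        have : a.val % m = a'.val % m := Nat.ModEq.add_left_cancel' b.val h2
        rwa [Nat.mod_eq_of_lt a.isLt, Nat.mod_eq_of_lt a'.isLt] at this))
  · intro e v hv heq
    obtain ⟨a, b, rfl⟩ := edge_repr e
    have hlt : (upcE m hm (edg m a b)).val < m := by
      rw [upcE_edg]; exact Nat.mod_lt _ hm
    simp only [edg, Sym2.mem_iff] at hv
    have := congrArg Fin.val heq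
    rcases hv with rfl | rfl <;> simp [upcV] at this <;> omega

private lemma lower (m k : ℕ) (hm : 0 < m)
    (cV : Fin m ⊕ Fin m → Fin k)
    (cE : (completeBipartiteGraph (Fin m) (Fin m)).edgeSet → Fin k)
    (hc : IsTotalColoring (completeBipartiteGraph (Fin m) (Fin m)) cV cE) :
    m + 2 ≤ k := by
  obtain ⟨h1, h2, h3⟩ := hc
  set gE : Fin m → Fin m → Fin k := fun a b => cE (edg m a b) with hgE
  -- distinct edges at a common left vertex
  have edg_ne_l : ∀ (a b b' : Fin m), b ≠ b' → edg m a b ≠ edg m a b' := by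
    intro a b b' hbb h
    exact hbb (edg_inj h).2
  have edg_ne_r : ∀ (a a' b : Fin m), a ≠ a' → edg m a b ≠ edg m a' b := by
    intro a a' b haa h
    exact haa (edg_inj h).1
  have injL : ∀ a : Fin m, Function.Injective (gE a) := by
    intro a b b' h
    by_contra hbb
    exact h2 _ _ (edg_ne_l a b b' hbb)
      ⟨Sum.inl a, by simp [edg], by simp [edg]⟩ h
  have injR : ∀ b : Fin m, Function.Injective (fun a => gE a b) := by
    intro b a a' h
    by_contra haa
    exact h2 _ _ (edg_ne_r a a' b haa)
      ⟨Sum.inr b, by simp [edg], by simp [edg]⟩ h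
  have notvalL : ∀ a b : Fin m, gE a b ≠ cV (Sum.inl a) := fun a b =>
    h3 (edg m a b) (Sum.inl a) (by simp [edg])
  have notvalR : ∀ a b : Fin m, gE a b ≠ cV (Sum.inr b) := fun a b =>
    h3 (edg m a b) (Sum.inr b) (by simp [edg])
  have vdist : ∀ a b : Fin m, cV (Sum.inl a) ≠ cV (Sum.inr b) := fun a b =>
    h1 _ _ (by simp)
  have injuL : ∀ a : Fin m, Function.Injective (Option.elim' (cV (Sum.inl a)) (gE a)) := by
    intro a x y h
    match x, y with
    | none, none => rfl
    | none, some b => exact absurd h.symm (notvalL a b)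
    | some b, none => exact absurd h (notvalL a b)
    | some b, some b' => exact congrArg some (injL a h)
  have injuR : ∀ b : Fin m, Function.Injective
      (Option.elim' (cV (Sum.inr b)) (fun a => gE a b)) := by
    intro b x y h
    match x, y with
    | none, none => rfl
    | none, some a => exact absurd h.symm (notvalR a b)
    | some a, none => exact absurd h (notvalR a b)
    | some a, some a' => exact congrArg some (injR b h)
  -- step 1 : m + 1 ≤ k
  have a0 : Fin m := ⟨0, hm⟩
  have step1 : m + 1 ≤ k := by
    have := Fintype.card_le_of_injective _ (injuL a0)
    simpa using this
  -- step 2 : k ≠ m + 1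
  by_contra hcon
  have hk : k = m + 1 := by omega
  subst hk
  have surjL : ∀ a : Fin m, Function.Surjective (Option.elim' (cV (Sum.inl a)) (gE a)) := by
    intro a
    have := (Fintype.bijective_iff_injective_and_card
      (Option.elim' (cV (Sum.inl a)) (gE a))).2 ⟨injuL a, by simp⟩
    exact this.2
  have surjR : ∀ b : Fin m, Function.Surjective
      (Option.elim' (cV (Sum.inr b)) (fun a => gE a b)) := by
    intro b
    have := (Fintype.bijective_iff_injective_and_card
      (Option.elim' (cV (Sum.inr b)) (fun a => gE a b))).2 ⟨injuR b, by simp⟩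
    exact this.2
  set c : Fin (m + 1) := cV (Sum.inl a0) with hc0
  have rowsum : ∀ a : Fin m,
      (∑ b : Fin m, if gE a b = c then 1 else 0) =
        (if cV (Sum.inl a) = c then 0 else 1) := by
    intro a
    obtain ⟨y, hy⟩ := surjL a c
    match y with
    | none =>
      replace hy : cV (Sum.inl a) = c := hy
      rw [if_pos hy]
      refine Finset.sum_eq_zero fun b _ => if_neg fun h => ?_
      exact notvalL a b (h.trans hy.symm)
    | some b₀ =>
      replace hy : gE a b₀ = c := hy
      rw [if_neg (fun h => notvalL a b₀ (hy.trans h.symm))]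
      have hiff : ∀ b : Fin m, gE a b = c ↔ b = b₀ :=
        fun b => ⟨fun h => injL a (h.trans hy.symm), fun h => h ▸ hy⟩
      calc (∑ b : Fin m, if gE a b = c then 1 else 0)
          = ∑ b : Fin m, if b = b₀ then 1 else 0 := by
            exact Finset.sum_congr rfl fun b _ => if_congr (hiff b) rfl rfl
        _ = 1 := by simp
  have colsum : ∀ b : Fin m,
      (∑ a : Fin m, if gE a b = c then 1 else 0) =
        (if cV (Sum.inr b) = c then 0 else 1) := by
    intro b
    obtain ⟨y, hy⟩ := surjR b c
    match y with
    | none =>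
      replace hy : cV (Sum.inr b) = c := hy
      rw [if_pos hy]
      refine Finset.sum_eq_zero fun a _ => if_neg fun h => ?_
      exact notvalR a b (h.trans hy.symm)
    | some a₀ =>
      replace hy : gE a₀ b = c := hy
      rw [if_neg (fun h => notvalR a₀ b (hy.trans h.symm))]
      have hiff : ∀ a : Fin m, gE a b = c ↔ a = a₀ :=
        fun a => ⟨fun h => injR b (h.trans hy.symm), fun h => h ▸ hy⟩
      calc (∑ a : Fin m, if gE a b = c then 1 else 0)
          = ∑ a : Fin m, if a = a₀ then 1 else 0 := by
            exact Finset.sum_congr rfl fun a _ => if_congr (hiff a) rfl rfl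
        _ = 1 := by simp
  have hRHS : (∑ b : Fin m, ∑ a : Fin m, if gE a b = c then 1 else 0) = m := by
    rw [Finset.sum_congr rfl fun b _ => colsum b]
    rw [Finset.sum_congr rfl fun b _ => if_neg (fun h => vdist a0 b (h.symm))]
    simp
  have hLHS : (∑ a : Fin m, ∑ b : Fin m, if gE a b = c then 1 else 0) < m := by
    rw [Finset.sum_congr rfl fun a _ => rowsum a]
    have hlt : (∑ a : Fin m, if cV (Sum.inl a) = c then 0 else 1) <
        ∑ _a : Fin m, 1 := by
      refine Finset.sum_lt_sum (fun i _ => by split <;> omega) ⟨a0, Finset.mem_univ a0, ?_⟩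
      rw [if_pos hc0.symm]
      omega
    simpa using hlt
  rw [Finset.sum_comm] at hLHS
  omega
theorem totalChromaticNumber_completeBipartiteGraph (m : ℕ) (hm : 0 < m) :
    totalChromaticNumber (completeBipartiteGraph (Fin m) (Fin m)) = m + 2 := by
  have hmem : m + 2 ∈ {k | ∃ (cV : Fin m ⊕ Fin m → Fin k)
      (cE : (completeBipartiteGraph (Fin m) (Fin m)).edgeSet → Fin k),
      IsTotalColoring (completeBipartiteGraph (Fin m) (Fin m)) cV cE} := upper m hm
  refine le_antisymm (Nat.sInf_le hmem) (le_csInf ⟨_, hmem⟩ ?_)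
  rintro k ⟨cV, cE, hc⟩
  exact lower m k hm cV cE hc
end

section
/- Let n = p^k where p is an odd prime and k is a positive integer. Then the total chromatic number of the unitary Cayley graph U_n equals φ(n) + 1. -/
namespace UCGAux

variable {n : ℕ}

open Classical in
/-- Color of a "unit" class, or the extra color `Fin.last N` for non-units. -/
noncomputable def g {N : ℕ} (E : (ZMod n)ˣ ≃ Fin N) (d : ZMod n) : Fin (N + 1) :=
  if h : IsUnit d then (E h.unit).castSucc else Fin.last N

open Classical in
/-- The edge coloring function. -/
noncomputable def f {N : ℕ} (E : (ZMod n)ˣ ≃ Fin N) (x y : ZMod n) : Fin (N + 1) :=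
  if x + y = 0 then Fin.last N
  else if (x * (y - x)⁻¹ - (2 : ZMod n)⁻¹).val % 2 = 0 then g E (y - x) else g E (x - y)

lemma g_ne_last {N : ℕ} (E : (ZMod n)ˣ ≃ Fin N) {d : ZMod n} (hd : IsUnit d) :
    g E d ≠ Fin.last N := by
  rw [g, dif_pos hd]
  exact (Fin.castSucc_lt_last _).ne

lemma g_inj {N : ℕ} (E : (ZMod n)ˣ ≃ Fin N) {d d' : ZMod n} (hd : IsUnit d)
    (h : g E d = g E d') : d = d' := by
  by_cases hd' : IsUnit d'
  · rw [g, dif_pos hd, g, dif_pos hd'] at h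
    have h2 := E.injective (Fin.castSucc_injective _ h)
    rw [← hd.unit_spec, ← hd'.unit_spec, h2]
  · simp only [g] at h
    rw [dif_neg hd'] at h
    rw [dif_pos hd] at h
    exact absurd (by rw [g, dif_pos hd]; exact h) (g_ne_last E hd)

lemma sub_isUnit_comm {x y : ZMod n} (h : IsUnit (x - y)) : IsUnit (y - x) := by
  rw [← neg_sub x y]; exact h.neg

lemma key (h2 : IsUnit (2 : ZMod n)) {d : ZMod n} (hd : IsUnit d) (x : ZMod n) :
    (2 * d) * (x * d⁻¹ - (2 : ZMod n)⁻¹) = 2 * x - d := by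
  have h1 : d * d⁻¹ = 1 := ZMod.mul_inv_of_unit d hd
  have h2' : (2 : ZMod n) * 2⁻¹ = 1 := ZMod.mul_inv_of_unit 2 h2
  linear_combination (2 * x) * h1 - d * h2'

lemma val_neg_one' [NeZero n] (h3 : 3 ≤ n) : (-1 : ZMod n).val = n - 1 := by
  have h : (-1 : ZMod n) = ((n - 1 : ℕ) : ZMod n) := by
    rw [Nat.cast_sub (by omega), ZMod.natCast_self, Nat.cast_one, zero_sub]
  rw [h, ZMod.val_cast_of_lt (by omega)]

lemma val_neg_two' [NeZero n] (h3 : 3 ≤ n) : (-2 : ZMod n).val = n - 2 := by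
  have h : (-2 : ZMod n) = ((n - 2 : ℕ) : ZMod n) := by
    push_cast [Nat.cast_sub (by omega : 2 ≤ n)]
    rw [ZMod.natCast_self, zero_sub]
  rw [h, ZMod.val_cast_of_lt (by omega)]

lemma par1 [NeZero n] (hodd : Odd n) (h3 : 3 ≤ n) {j j' : ZMod n} (h : j + j' = -1) :
    j.val % 2 = j'.val % 2 := by
  have hv := ZMod.val_add j j'
  rw [h, val_neg_one' h3] at hv
  have l1 := ZMod.val_lt j
  have l2 := ZMod.val_lt j'
  have hs : j.val + j'.val = n - 1 := by
    rcases Nat.lt_or_ge (j.val + j'.val) n with h' | h'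
    · rw [Nat.mod_eq_of_lt h'] at hv; omega
    · rw [Nat.mod_eq_sub_mod h', Nat.mod_eq_of_lt (by omega)] at hv; omega
  have hno : n % 2 = 1 := Nat.odd_iff.mp hodd
  omega

lemma par2 [NeZero n] (hodd : Odd n) (h3 : 3 ≤ n) {j j' : ZMod n} (h : j + j' = -2)
    (hj : j ≠ -1) : j.val % 2 ≠ j'.val % 2 := by
  have hv := ZMod.val_add j j'
  rw [h, val_neg_two' h3] at hv
  have l1 := ZMod.val_lt j
  have l2 := ZMod.val_lt j'
  have hjv : j.val ≠ n - 1 := by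
    intro hh
    apply hj
    apply ZMod.val_injective
    rw [hh, val_neg_one' h3]
  have hs : j.val + j'.val = n - 2 := by
    rcases Nat.lt_or_ge (j.val + j'.val) n with h' | h'
    · rw [Nat.mod_eq_of_lt h'] at hv; omega
    · rw [Nat.mod_eq_sub_mod h', Nat.mod_eq_of_lt (by omega)] at hv; omega
  have hno : n % 2 = 1 := Nat.odd_iff.mp hodd
  omega

lemma f_symm [NeZero n] {N : ℕ} (E : (ZMod n)ˣ ≃ Fin N) (hodd : Odd n) (h3 : 3 ≤ n)
    (h2 : IsUnit (2 : ZMod n)) (x y : ZMod n) : f E x y = f E y x := by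
  rw [f, f]
  by_cases hxy : x + y = 0
  · rw [if_pos hxy, if_pos (by rwa [add_comm])]
  · rw [if_neg hxy, if_neg (fun hh : y + x = 0 => hxy (by rwa [add_comm] at hh))]
    by_cases hd : IsUnit (y - x)
    · have hd' : IsUnit (x - y) := sub_isUnit_comm hd
      have e1 := key h2 hd x
      have e2 := key h2 hd' y
      set j := x * (y - x)⁻¹ - (2 : ZMod n)⁻¹ with hj
      set j₂ := y * (x - y)⁻¹ - (2 : ZMod n)⁻¹ with hj₂
      have hsum : j + j₂ = -2 := by
        apply (h2.mul hd).mul_left_cancel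
        linear_combination e1 - e2
      have hjne : j ≠ -1 := by
        intro hh
        apply hxy
        rw [hh] at e1
        linear_combination -e1
      have hpar := par2 hodd h3 hsum hjne
      by_cases hc : j.val % 2 = 0
      · rw [if_pos hc, if_neg (by omega)]
      · rw [if_neg hc, if_pos (by omega)]
    · have hd' : ¬IsUnit (x - y) := fun hh => hd (sub_isUnit_comm hh)
      have A : g E (y - x) = Fin.last N := by rw [g, dif_neg hd]
      have B : g E (x - y) = Fin.last N := by rw [g, dif_neg hd']
      split_ifs <;> simp [A, B]

lemma f_ne_vx [NeZero n] {N : ℕ} (E : (ZMod n)ˣ ≃ Fin N) (hodd : Odd n) (h3 : 3 ≤ n)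
    (h2 : IsUnit (2 : ZMod n)) {x y : ZMod n} (hd : IsUnit (y - x)) :
    f E x y ≠ g E (-2 * x) := by
  rw [f]
  by_cases hxy : x + y = 0
  · rw [if_pos hxy]
    have hh : -2 * x = y - x := by linear_combination -hxy
    rw [hh]
    exact (g_ne_last E hd).symm
  · rw [if_neg hxy]
    split_ifs with hpar
    · intro hE
      have hh := g_inj E hd hE
      exact hxy (by linear_combination hh)
    · intro hE
      have hd' : IsUnit (x - y) := sub_isUnit_comm hd
      have heq := g_inj E hd' hE
      have e1 := key h2 hd x
      have hj : x * (y - x)⁻¹ - (2 : ZMod n)⁻¹ = 0 := by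
        apply (h2.mul hd).mul_left_cancel
        rw [mul_zero]
        linear_combination e1 + heq
      rw [hj] at hpar
      simp [ZMod.val_zero] at hpar

lemma f_ne_f [NeZero n] {N : ℕ} (E : (ZMod n)ˣ ≃ Fin N) (hodd : Odd n) (h3 : 3 ≤ n)
    (h2 : IsUnit (2 : ZMod n)) {x y z : ZMod n} (hdy : IsUnit (y - x))
    (hdz : IsUnit (z - x)) (hyz : y ≠ z) : f E x y ≠ f E x z := by
  have hdy' : IsUnit (x - y) := sub_isUnit_comm hdy
  have hdz' : IsUnit (x - z) := sub_isUnit_comm hdz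
  rw [f, f]
  by_cases h1 : x + y = 0 <;> by_cases hz1 : x + z = 0
  · exact absurd (show y = z by linear_combination h1 - hz1) hyz
  · rw [if_pos h1, if_neg hz1]
    split_ifs with hc
    · exact (g_ne_last E hdz).symm
    · exact (g_ne_last E hdz').symm
  · rw [if_neg h1, if_pos hz1]
    split_ifs with hc
    · exact g_ne_last E hdy
    · exact g_ne_last E hdy'
  · rw [if_neg h1, if_neg hz1]
    have e1 := key h2 hdy x
    have e2 := key h2 hdz x
    split_ifs with p1 p2 p2
    · intro hE
      exact hyz (by linear_combination g_inj E hdy hE)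
    · intro hE
      have hh := g_inj E hdy hE
      -- y - x = x - z, so z - x = x - y
      have hzx : z - x = x - y := by linear_combination hh
      rw [hzx] at p2 e2
      have hsum : (x * (y - x)⁻¹ - (2 : ZMod n)⁻¹) + (x * (x - y)⁻¹ - (2 : ZMod n)⁻¹)
          = -1 := by
        apply (h2.mul hdy).mul_left_cancel
        linear_combination e1 - e2
      have := par1 hodd h3 hsum
      omega
    · intro hE
      have hh := g_inj E hdy' hE
      -- x - y = z - x
      have hzx : z - x = x - y := by linear_combination -hh
      rw [hzx] at p2 e2
      have hsum : (x * (y - x)⁻¹ - (2 : ZMod n)⁻¹) + (x * (x - y)⁻¹ - (2 : ZMod n)⁻¹)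
          = -1 := by
        apply (h2.mul hdy).mul_left_cancel
        linear_combination e1 - e2
      have := par1 hodd h3 hsum
      omega
    · intro hE
      have hh := g_inj E hdy' hE
      exact hyz (by linear_combination -hh)

end UCGAux

theorem totalChromaticNumber_unitaryCayleyGraph_odd_prime_pow
    (p k : ℕ) (hp : p.Prime) (hpodd : Odd p) (hk : 0 < k) :
    totalChromaticNumber (unitaryCayleyGraph (p ^ k)) = Nat.totient (p ^ k) + 1 := by
  classical
  have hp2 : 2 ≤ p := hp.two_le
  have hpo : p % 2 = 1 := Nat.odd_iff.mp hpodd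
  set n := p ^ k with hn
  have hpn : p ≤ n := Nat.le_self_pow hk.ne' p
  have hn3 : 3 ≤ n := by omega
  haveI : NeZero n := ⟨by omega⟩
  haveI : Fact (1 < n) := ⟨by omega⟩
  have hodd : Odd n := hpodd.pow
  haveI : Fact p.Prime := ⟨hp⟩
  have hdvd : p ∣ n := dvd_pow_self p hk.ne'
  set π : ZMod n →+* ZMod p := ZMod.castHom hdvd (ZMod p) with hπ
  have unit_iff : ∀ x : ZMod n, IsUnit x ↔ π x ≠ 0 := by
    intro x
    constructor
    · intro hx h0
      have h1 : IsUnit (π x) := hx.map π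
      rw [h0] at h1
      exact not_isUnit_zero h1
    · intro hx
      have hxv : x = ((x.val : ℕ) : ZMod n) := (ZMod.natCast_zmod_val x).symm
      rw [hxv, ZMod.isUnit_iff_coprime]
      rw [hxv, map_natCast] at hx
      have hpd : ¬ p ∣ x.val := fun hdd => hx ((ZMod.natCast_eq_zero_iff _ _).mpr hdd)
      exact (Nat.coprime_pow_right_iff hk x.val p).mpr
        ((Nat.Prime.coprime_iff_not_dvd hp).mpr hpd).symm
  have h2u : IsUnit (2 : ZMod n) := by
    rw [unit_iff]
    have h2 : π 2 = ((2 : ℕ) : ZMod p) := by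
      rw [show ((2 : ℕ) : ZMod p) = (2 : ZMod p) by push_cast; ring]
      exact map_ofNat π 2
    rw [h2]
    intro hc
    have := (ZMod.natCast_eq_zero_iff 2 p).mp hc
    have := Nat.le_of_dvd (by norm_num) this
    omega
  have hnu : ∀ x y : ZMod n, ¬IsUnit x → ¬IsUnit y → ¬IsUnit (y - x) := by
    intro x y hx hy hu
    rw [unit_iff, not_ne_iff] at hx hy
    rw [unit_iff] at hu
    exact hu (by rw [map_sub, hx, hy, sub_zero])
  set N := n.totient with hN
  have hcard : Fintype.card (ZMod n)ˣ = N := ZMod.card_units_eq_totient n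
  let E : (ZMod n)ˣ ≃ Fin N := Fintype.equivFinOfCardEq hcard
  set G := unitaryCayleyGraph n with hG
  have adj_iff : ∀ u v : ZMod n, G.Adj u v ↔ u ≠ v ∧ IsUnit (v - u) := by
    intro u v
    rw [hG, unitaryCayleyGraph, SimpleGraph.fromRel_adj]
    constructor
    · rintro ⟨hne, h | h⟩
      · exact ⟨hne, UCGAux.sub_isUnit_comm h⟩
      · exact ⟨hne, h⟩
    · rintro ⟨hne, h⟩
      exact ⟨hne, Or.inr h⟩
  have hsymm : ∀ x y : ZMod n, UCGAux.f E x y = UCGAux.f E y x :=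
    UCGAux.f_symm E hodd hn3 h2u
  let cV : ZMod n → Fin (N + 1) := fun v => UCGAux.g E (-2 * v)
  let cE : G.edgeSet → Fin (N + 1) := fun ed => Sym2.lift ⟨UCGAux.f E, hsymm⟩ ed.1
  have unit_neg2mul : ∀ v : ZMod n, IsUnit v → IsUnit (-2 * v) := by
    intro v hv
    exact (h2u.neg).mul hv
  have unit_of_neg2mul : ∀ v : ZMod n, IsUnit (-2 * v) → IsUnit v := by
    intro v hv
    exact isUnit_of_mul_isUnit_right hv
  -- the three conditions
  have cond1 : ∀ u v : ZMod n, G.Adj u v → cV u ≠ cV v := by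
    intro u v huv
    show UCGAux.g E (-2 * u) ≠ UCGAux.g E (-2 * v)
    rw [adj_iff] at huv
    obtain ⟨hne, hd⟩ := huv
    by_cases hu : IsUnit u <;> by_cases hv : IsUnit v
    · intro hE
      have hh := UCGAux.g_inj E (unit_neg2mul u hu) hE
      exact hne ((h2u.neg).mul_left_cancel hh)
    · intro hE
      have hlast : UCGAux.g E (-2 * v) = Fin.last N := by
        rw [UCGAux.g, dif_neg (fun hh => hv (unit_of_neg2mul v hh))]
      rw [hlast] at hE
      exact UCGAux.g_ne_last E (unit_neg2mul u hu) hE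
    · intro hE
      have hlast : UCGAux.g E (-2 * u) = Fin.last N := by
        rw [UCGAux.g, dif_neg (fun hh => hu (unit_of_neg2mul u hh))]
      rw [hlast] at hE
      exact UCGAux.g_ne_last E (unit_neg2mul v hv) hE.symm
    · exact absurd hd (hnu u v hu hv)
  have edge_main : ∀ s1 s2 : Sym2 (ZMod n), s1 ∈ G.edgeSet → s2 ∈ G.edgeSet →
      s1 ≠ s2 → ∀ x, x ∈ s1 → x ∈ s2 →
      Sym2.lift ⟨UCGAux.f E, hsymm⟩ s1 ≠ Sym2.lift ⟨UCGAux.f E, hsymm⟩ s2 := by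
    intro s1 s2
    induction s1 using Sym2.ind with
    | _ a b =>
      induction s2 using Sym2.ind with
      | _ c d =>
        intro h1 h2 hne x hx1 hx2
        rw [SimpleGraph.mem_edgeSet, adj_iff] at h1 h2
        rw [Sym2.mem_iff] at hx1 hx2
        simp only [Sym2.lift_mk]
        rcases hx1 with rfl | rfl <;> rcases hx2 with rfl | rfl
        · -- edges s(x,b), s(x,d)
          exact UCGAux.f_ne_f E hodd hn3 h2u h1.2 h2.2
            (fun hh => hne (by rw [hh]))
        · -- edges s(x,b), s(c,x)
          rw [hsymm c x]
          refine UCGAux.f_ne_f E hodd hn3 h2u h1.2 (UCGAux.sub_isUnit_comm h2.2) ?_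
          intro hh
          exact hne (by rw [hh, Sym2.eq_swap])
        · -- edges s(a,x), s(x,d)
          rw [hsymm a x]
          refine UCGAux.f_ne_f E hodd hn3 h2u (UCGAux.sub_isUnit_comm h1.2) h2.2 ?_
          intro hh
          exact hne (by rw [hh, ← Sym2.eq_swap])
        · -- edges s(a,x), s(c,x)
          rw [hsymm a x, hsymm c x]
          refine UCGAux.f_ne_f E hodd hn3 h2u (UCGAux.sub_isUnit_comm h1.2)
            (UCGAux.sub_isUnit_comm h2.2) ?_
          intro hh
          exact hne (by rw [hh])
  have vert_main : ∀ s : Sym2 (ZMod n), s ∈ G.edgeSet → ∀ v, v ∈ s →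
      Sym2.lift ⟨UCGAux.f E, hsymm⟩ s ≠ cV v := by
    intro s
    induction s using Sym2.ind with
    | _ a b =>
      intro hs v hv
      rw [SimpleGraph.mem_edgeSet, adj_iff] at hs
      rw [Sym2.mem_iff] at hv
      simp only [Sym2.lift_mk]
      rcases hv with rfl | rfl
      · exact UCGAux.f_ne_vx E hodd hn3 h2u hs.2
      · rw [hsymm a v]
        exact UCGAux.f_ne_vx E hodd hn3 h2u (UCGAux.sub_isUnit_comm hs.2)
  have hmem : (N + 1) ∈ {m | ∃ (cv : ZMod n → Fin m) (ce : G.edgeSet → Fin m),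
      IsTotalColoring G cv ce} := by
    refine ⟨cV, cE, cond1, ?_, ?_⟩
    · rintro ⟨s1, hs1⟩ ⟨s2, hs2⟩ hne ⟨x, hx1, hx2⟩
      exact edge_main s1 s2 hs1 hs2 (fun hh => hne (Subtype.ext hh)) x hx1 hx2
    · rintro ⟨s, hs⟩ v hv
      exact vert_main s hs v hv
  have hlb : ∀ m, (∃ (cv : ZMod n → Fin m) (ce : G.edgeSet → Fin m),
      IsTotalColoring G cv ce) → N + 1 ≤ m := by
    rintro m ⟨cv, ce, hc1, hc2, hc3⟩
    have adj0 : ∀ u : (ZMod n)ˣ, G.Adj 0 (u : ZMod n) := by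
      intro u
      rw [adj_iff]
      constructor
      · intro hh
        have : IsUnit (0 : ZMod n) := by rw [hh]; exact u.isUnit
        exact not_isUnit_zero this
      · simpa using u.isUnit
    let Φ : Option (ZMod n)ˣ → Fin m := fun o =>
      match o with
      | none => cv 0
      | some u => ce ⟨s(0, (u : ZMod n)), (G.mem_edgeSet).mpr (adj0 u)⟩
    have hinj : Function.Injective Φ := by
      rintro (_ | u) (_ | u') h
      · rfl
      · exact absurd h.symm (hc3 _ 0 (by rw [Sym2.mem_iff]; left; rfl))
      · exact absurd h (hc3 _ 0 (by rw [Sym2.mem_iff]; left; rfl))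
      · by_contra hne
        have hne' : (⟨s(0, (u : ZMod n)), (G.mem_edgeSet).mpr (adj0 u)⟩ :
            G.edgeSet) ≠ ⟨s(0, (u' : ZMod n)), (G.mem_edgeSet).mpr (adj0 u')⟩ := by
          intro hh
          apply hne
          have := Subtype.ext_iff.mp hh
          rw [Sym2.congr_right] at this
          rw [Units.ext this]
        exact hc2 _ _ hne' ⟨0, by rw [Sym2.mem_iff]; left; rfl,
          by rw [Sym2.mem_iff]; left; rfl⟩ h
    have hcle := Fintype.card_le_of_injective Φ hinj
    rw [Fintype.card_option, hcard, Fintype.card_fin] at hcle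
    exact hcle
  have hle : sInf {m | ∃ (cv : ZMod n → Fin m) (ce : G.edgeSet → Fin m),
      IsTotalColoring G cv ce} ≤ N + 1 := Nat.sInf_le hmem
  have hge : N + 1 ≤ sInf {m | ∃ (cv : ZMod n → Fin m) (ce : G.edgeSet → Fin m),
      IsTotalColoring G cv ce} := by
    have hmem' := Nat.sInf_mem ⟨N + 1, hmem⟩
    exact hlb _ hmem'
  rw [totalChromaticNumber]
  omega
end

section
/- Let G be a circulant graph on Z_n with n odd, symmetric connection set S, and degree Δ = |S|, such that (Δ+1) divides n, no element of S is congruent to 0 modulo Δ+1, and no two distinct elements of S are congruent to each other modulo Δ+1. Then G is type I, i.e., its total chromatic number equals Δ + 1. -/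
theorem circulant_odd_type_one (n : ℕ) [NeZero n] (hodd : Odd n)
    (S : Finset (ZMod n))
    (hS0 : (0 : ZMod n) ∉ S) (hSsymm : ∀ s ∈ S, -s ∈ S)
    (hdvd : (S.card + 1) ∣ n)
    (hndvd : ∀ s ∈ S, s.val % (S.card + 1) ≠ 0)
    (hdistinct : ∀ s ∈ S, ∀ t ∈ S, s ≠ t → s.val % (S.card + 1) ≠ t.val % (S.card + 1)) :
    totalChromaticNumber (SimpleGraph.circulantGraph (S : Set (ZMod n))) = S.card + 1 := by
  classical
  set G := SimpleGraph.circulantGraph (S : Set (ZMod n)) with hG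
  -- basic facts
  have hmodd : Odd (S.card + 1) := by
    obtain ⟨c, hc⟩ := hdvd
    exact (Nat.odd_mul.mp (hc ▸ hodd)).1
  have h2 : IsUnit (2 : ZMod (S.card + 1)) := by
    have := (ZMod.isUnit_iff_coprime 2 (S.card + 1)).mpr (Nat.coprime_two_left.mpr hmodd)
    simpa using this
  set u : (ZMod (S.card + 1))ˣ := h2.unit with hu
  have huval : (u : ZMod (S.card + 1)) = 2 := h2.unit_spec
  set φ : ZMod n →+* ZMod (S.card + 1) := ZMod.castHom hdvd (ZMod (S.card + 1)) with hφ
  have hφval : ∀ s : ZMod n, (φ s).val = s.val % (S.card + 1) := by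
    intro s
    rw [hφ, ZMod.castHom_apply, ← ZMod.natCast_val, ZMod.val_natCast]
  have hφS : ∀ s ∈ S, φ s ≠ 0 := by
    intro s hs h
    exact hndvd s hs (by rw [← hφval, h]; simp)
  have hφinj : ∀ s ∈ S, ∀ t ∈ S, φ s = φ t → s = t := by
    intro s hs t ht h
    by_contra hne
    exact hdistinct s hs t ht hne (by rw [← hφval, ← hφval, h])
  have hAdjS : ∀ {a b : ZMod n}, G.Adj a b → b - a ∈ S := by
    intro a b hab
    rw [hG, SimpleGraph.circulantGraph_adj] at hab
    rcases hab.2 with h | h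
    · simpa using hSsymm _ h
    · exact h
  have hφAdj : ∀ {a b : ZMod n}, G.Adj a b → φ a ≠ φ b := by
    intro a b hab h
    have := hφS _ (hAdjS hab)
    rw [map_sub, ← h, sub_self] at this
    exact this rfl
  -- the coloring
  set toF : ZMod (S.card + 1) → Fin (S.card + 1) := fun x => x with htoF
  have toFinj : ∀ x y : ZMod (S.card + 1), toF x = toF y → x = y := fun x y h => h
  set cV : ZMod n → Fin (S.card + 1) := fun v => toF (φ v) with hcV
  set F : Sym2 (ZMod n) → ZMod (S.card + 1) :=
    Sym2.lift ⟨fun x y => (↑u⁻¹ : ZMod (S.card + 1)) * (φ x + φ y), by intro x y; ring_nf⟩ with hF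
  set cE : G.edgeSet → Fin (S.card + 1) := fun e => toF (F e.1) with hcE
  have hFmk : ∀ x y : ZMod n, F (s(x, y)) = (↑u⁻¹ : ZMod (S.card + 1)) * (φ x + φ y) := by
    intro x y; rw [hF, Sym2.lift_mk]
  have hcol : IsTotalColoring G cV cE := by
    refine ⟨?_, ?_, ?_⟩
    · intro a b hab h
      exact hφAdj hab (toFinj _ _ h)
    · rintro e f hef ⟨x, hxe, hxf⟩ h
      apply hef
      set a := Sym2.Mem.other hxe with ha
      set b := Sym2.Mem.other hxf with hb
      have hea : s(x, a) = (e : Sym2 (ZMod n)) := Sym2.other_spec hxe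
      have hfb : s(x, b) = (f : Sym2 (ZMod n)) := Sym2.other_spec hxf
      have hadj_a : G.Adj x a := by rw [← SimpleGraph.mem_edgeSet, hea]; exact e.2
      have hadj_b : G.Adj x b := by rw [← SimpleGraph.mem_edgeSet, hfb]; exact f.2
      have h' : F e.1 = F f.1 := toFinj _ _ h
      rw [← hea, ← hfb, hFmk, hFmk] at h'
      have h'' : φ a = φ b := by
        have := (Units.mul_right_inj u⁻¹).mp h'
        exact add_left_cancel this
      have hab : a = b := by
        have h1 : a - x ∈ S := hAdjS hadj_a
        have h2 : b - x ∈ S := hAdjS hadj_b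
        have := hφinj _ h1 _ h2 (by rw [map_sub, map_sub, h''])
        exact sub_left_injective this
      apply Subtype.ext
      rw [← hea, ← hfb, hab]
    · intro e v hv h
      set a := Sym2.Mem.other hv with ha
      have hea : s(v, a) = (e : Sym2 (ZMod n)) := Sym2.other_spec hv
      have hadj : G.Adj v a := by rw [← SimpleGraph.mem_edgeSet, hea]; exact e.2
      have h' : F e.1 = φ v := toFinj _ _ h
      rw [← hea, hFmk] at h'
      have h2' : φ v + φ a = 2 * φ v := by
        calc φ v + φ a = (↑u * ↑u⁻¹ : ZMod (S.card + 1)) * (φ v + φ a) := by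
              rw [Units.mul_inv]; ring
          _ = ↑u * ((↑u⁻¹ : ZMod (S.card + 1)) * (φ v + φ a)) := by ring
          _ = ↑u * φ v := by rw [h']
          _ = 2 * φ v := by rw [huval]
      have : φ a = φ v := by linear_combination h2'
      exact hφAdj hadj this.symm
  -- sInf
  have hmem : (S.card + 1) ∈ {k | ∃ (cV : ZMod n → Fin k) (cE : G.edgeSet → Fin k),
      IsTotalColoring G cV cE} := ⟨cV, cE, hcol⟩
  have hlb : ∀ k ∈ {k | ∃ (cV : ZMod n → Fin k) (cE : G.edgeSet → Fin k),
      IsTotalColoring G cV cE}, S.card + 1 ≤ k := by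
    rintro k ⟨dV, dE, h1, h2, h3⟩
    have hadj0 : ∀ s ∈ S, G.Adj 0 s := by
      intro s hs
      rw [hG, SimpleGraph.circulantGraph_adj]
      constructor
      · rintro rfl; exact hS0 hs
      · right; simpa using hs
    set es : {x // x ∈ S} → G.edgeSet :=
      fun s => ⟨s(0, s.1), G.mem_edgeSet.mpr (hadj0 s.1 s.2)⟩ with hes
    set f : {x // x ∈ S} → Fin k := fun s => dE (es s) with hf
    have hesne : ∀ s t : {x // x ∈ S}, s ≠ t → es s ≠ es t := by
      intro s t hst h
      apply hst
      have := Subtype.ext_iff.mp h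
      simp only [hes, Sym2.eq, Sym2.rel_iff', Prod.mk.injEq, Prod.swap_prod_mk] at this
      rcases this with ⟨-, h'⟩ | ⟨h1', h2'⟩
      · exact Subtype.ext h'
      · exact absurd (h2' ▸ s.2) hS0
    have hfinj : Function.Injective f := by
      intro s t h
      by_contra hst
      exact h2 (es s) (es t) (hesne s t hst) ⟨0, by simp [hes], by simp [hes]⟩ h
    have hfne : ∀ s, f s ≠ dV 0 := by
      intro s
      exact h3 (es s) 0 (by simp [hes])
    have hcard : (insert (dV 0) (Finset.univ.image f)).card = S.card + 1 := by
      rw [Finset.card_insert_of_notMem (by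
        simp only [Finset.mem_image, Finset.mem_univ, true_and, not_exists]
        exact fun s => hfne s)]
      rw [Finset.card_image_of_injective _ hfinj, Finset.card_univ, Fintype.card_coe]
    calc S.card + 1 = (insert (dV 0) (Finset.univ.image f)).card := hcard.symm
      _ ≤ Fintype.card (Fin k) := Finset.card_le_univ _
      _ = k := Fintype.card_fin k
  exact le_antisymm (Nat.sInf_le hmem) (le_csInf ⟨_, hmem⟩ hlb)
end

section
/- Let G be a Cayley graph of a finite group H of odd order n with symmetric generating set S (not containing the identity), and suppose G is not a complete graph and its clique number ω satisfies ω > n/3. Then G is not type I; that is, its total chromatic number is at least Δ + 2, where Δ = |S| is the degree of G. -/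
/-- The Cayley graph of a group `H` with connection set `S`: `g` and `h` are adjacent
iff `g ≠ h` and `g⁻¹ * h ∈ S` (or `h⁻¹ * g ∈ S`). -/
def cayleyGraph {H : Type*} [Group H] (S : Finset H) : SimpleGraph H :=
  SimpleGraph.fromRel (fun g h => g⁻¹ * h ∈ S)

/-!
Suppose `cayleyGraph S` had a total coloring with `Δ + 1` colors, `Δ = |S|`. Every vertex then
sees each color exactly once, on itself or on an incident edge, so the vertices not colored `i`
are perfectly matched by the edges colored `i`. As `|H|` is odd, every vertex color class is an
independent set of odd size. Left translations are automorphisms of a Cayley graph, so for an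
independent set `A` and a clique `K` the map `(a, k) ↦ a k⁻¹` is injective on `A × K`: two
pairs with the same image would translate an edge of `K` onto an edge inside `A`. Hence
`|A| ω ≤ |H| < 3 ω`, every color class is a single vertex, `|H| = Δ + 1`, and the graph is
complete.
-/

open Finset

section TotalColoring

variable {V : Type*} {G : SimpleGraph V} {k : ℕ} {cV : V → Fin k} {cE : G.edgeSet → Fin k}

theorem totalColorings_nonempty [Finite V] (G : SimpleGraph V) :
    {k | ∃ (cV : V → Fin k) (cE : G.edgeSet → Fin k), IsTotalColoring G cV cE}.Nonempty := by
  have := Fintype.ofFinite (V ⊕ G.edgeSet)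
  let e := Fintype.equivFin (V ⊕ G.edgeSet)
  exact ⟨_, fun v => e (.inl v), fun x => e (.inr x),
    fun _ _ huv => e.injective.ne (Sum.inl_injective.ne huv.ne),
    fun _ _ hxy _ => e.injective.ne (Sum.inr_injective.ne hxy),
    fun _ _ _ => e.injective.ne Sum.inr_ne_inl⟩

theorem le_totalChromaticNumber [Finite V] {m : ℕ}
    (h : ∀ k (cV : V → Fin k) (cE : G.edgeSet → Fin k), IsTotalColoring G cV cE → m ≤ k) :
    m ≤ totalChromaticNumber G :=
  le_csInf (totalColorings_nonempty G) fun k ⟨cV, cE, hc⟩ => h k cV cE hc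

variable (cV cE) in
def incidentColors (v : V) : Option (G.incidenceSet v) → Fin k :=
  fun o => o.elim (cV v) fun e => cE ⟨e, e.2.1⟩

namespace IsTotalColoring

theorem injective_incidentColors (hc : IsTotalColoring G cV cE) (v : V) :
    Function.Injective (incidentColors cV cE v) := by
  rintro (_ | e) (_ | f) hef
  · rfl
  · exact absurd hef.symm (hc.2.2 _ v f.2.2)
  · exact absurd hef (hc.2.2 _ v e.2.2)
  · by_contra hne
    exact hc.2.1 _ _ (fun h => hne (congrArg some (Subtype.ext (by simpa using h))))
      ⟨v, e.2.2, f.2.2⟩ hef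

theorem isIndepSet_filter_eq [Fintype V] (hc : IsTotalColoring G cV cE) (i : Fin k) :
    G.IsIndepSet (({v | cV v = i} : Finset V) : Set V) :=
  fun u hu v hv _ huv => hc.1 u v huv (by simp_all)

variable [Fintype V] [DecidableRel G.Adj]

theorem degree_lt (hc : IsTotalColoring G cV cE) (v : V) : G.degree v < k := by
  classical
  have := Fintype.card_le_of_injective _ (hc.injective_incidentColors v)
  rwa [Fintype.card_option, SimpleGraph.card_incidenceSet_eq_degree, Fintype.card_fin] at this

theorem surjective_incidentColors (hc : IsTotalColoring G cV cE) {v : V}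
    (hv : G.degree v + 1 = k) : Function.Surjective (incidentColors cV cE v) := by
  classical
  refine ((Fintype.bijective_iff_injective_and_card _).2
    ⟨hc.injective_incidentColors v, ?_⟩).2
  rw [Fintype.card_option, SimpleGraph.card_incidenceSet_eq_degree, Fintype.card_fin, hv]

theorem even_card_filter_ne (hc : IsTotalColoring G cV cE) (hreg : ∀ v, G.degree v + 1 = k)
    (i : Fin k) : Even #{v | cV v ≠ i} := by
  classical
  have hcover : ({v | cV v ≠ i} : Finset V) =
      ({e | cE e = i} : Finset G.edgeSet).biUnion fun e => (e : Sym2 V).toFinset := by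
    ext v
    simp only [mem_filter, mem_univ, true_and, mem_biUnion, Sym2.mem_toFinset]
    constructor
    · intro hv
      obtain ⟨_ | e, he⟩ := hc.surjective_incidentColors (hreg v) i
      · exact absurd he hv
      · exact ⟨_, he, e.2.2⟩
    · rintro ⟨e, he, hve⟩ rfl
      exact hc.2.2 e v hve he
  rw [hcover, card_biUnion]
  · simp only [Sym2.card_toFinset_of_not_isDiag _ (G.not_isDiag_of_mem_edgeSet (Subtype.prop _)),
      sum_const, smul_eq_mul]
    exact even_two.mul_left _
  · intro e he f hf hef
    simp only [coe_filter, mem_univ, true_and, Set.mem_ofPred_eq] at he hf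
    exact disjoint_left.2 fun v hve hvf =>
      hc.2.1 e f hef ⟨v, Sym2.mem_toFinset.1 hve, Sym2.mem_toFinset.1 hvf⟩ (he.trans hf.symm)

theorem odd_card_filter_eq (hc : IsTotalColoring G cV cE) (hreg : ∀ v, G.degree v + 1 = k)
    (hodd : Odd (Fintype.card V)) (i : Fin k) : Odd #{v | cV v = i} := by
  have hsplit := card_filter_add_card_filter_not (s := univ) (fun v => cV v = i)
  rw [card_univ] at hsplit
  rw [← hsplit] at hodd
  exact (Nat.odd_add.1 hodd).2 (hc.even_card_filter_ne hreg i)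

end IsTotalColoring

end TotalColoring

theorem SimpleGraph.IsRegularOfDegree.eq_top {V : Type*} [Fintype V] {G : SimpleGraph V}
    [DecidableRel G.Adj] (h : G.IsRegularOfDegree (Fintype.card V - 1)) : G = ⊤ :=
  eq_top_iff.2 fun v _ hvw => (G.degree_eq_card_sub_one v).1 (h v) hvw

section Cayley

variable {H : Type*} [Group H] {S : Finset H}

theorem cayleyGraph_adj_iff (hS1 : (1 : H) ∉ S) (hSsymm : ∀ s ∈ S, s⁻¹ ∈ S) {g h : H} :
    (cayleyGraph S).Adj g h ↔ g⁻¹ * h ∈ S := by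
  refine ⟨?_, fun hs => ⟨?_, Or.inl hs⟩⟩
  · rintro ⟨-, hs | hs⟩
    · exact hs
    · simpa using hSsymm _ hs
  · rintro rfl
    simp_all

theorem cayleyGraph_adj_mul_left (g : H) {a b : H} :
    (cayleyGraph S).Adj (g * a) (g * b) ↔ (cayleyGraph S).Adj a b := by
  simp [cayleyGraph, mul_assoc]

theorem cayleyGraph_isRegularOfDegree [Fintype H] [DecidableRel (cayleyGraph S).Adj]
    (hS1 : (1 : H) ∉ S) (hSsymm : ∀ s ∈ S, s⁻¹ ∈ S) :
    (cayleyGraph S).IsRegularOfDegree #S := by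
  intro g
  rw [← SimpleGraph.card_neighborFinset_eq_degree, ← S.card_map (mulLeftEmbedding g)]
  congr 1
  ext h
  simp [cayleyGraph_adj_iff hS1 hSsymm, ← eq_inv_mul_iff_mul_eq]

theorem cayleyGraph_card_mul_card_le [Fintype H] {A K : Finset H}
    (hA : (cayleyGraph S).IsIndepSet A) (hK : (cayleyGraph S).IsClique K) :
    #A * #K ≤ Fintype.card H := by
  classical
  rw [← card_product, ← card_univ]
  refine card_le_card_of_injOn (fun p => p.1 * p.2⁻¹) (fun _ _ => mem_coe.2 (mem_univ _)) ?_
  rintro ⟨a₁, k₁⟩ h₁ ⟨a₂, k₂⟩ h₂ (heq : a₁ * k₁⁻¹ = a₂ * k₂⁻¹)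
  simp only [coe_product, Set.mem_prod, mem_coe] at h₁ h₂
  obtain rfl : k₁ = k₂ := by
    by_contra hk
    have hadj := (cayleyGraph_adj_mul_left (a₁ * k₁⁻¹)).2 (hK h₁.2 h₂.2 hk)
    rw [inv_mul_cancel_right, heq, inv_mul_cancel_right] at hadj
    exact hA h₁.1 h₂.1 hadj.ne hadj
  rw [mul_right_cancel heq]

end Cayley

theorem cayley_odd_big_clique_not_type_one_general {H : Type*} [Group H] [Fintype H]
    (S : Finset H)
    (hS1 : (1 : H) ∉ S) (hSsymm : ∀ s ∈ S, s⁻¹ ∈ S)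
    (hodd : Odd (Fintype.card H))
    (hnc : cayleyGraph S ≠ ⊤)
    (hclique : 3 * (cayleyGraph S).cliqueNum > Fintype.card H) :
    S.card + 2 ≤ totalChromaticNumber (cayleyGraph S) := by
  classical
  have hreg := cayleyGraph_isRegularOfDegree hS1 hSsymm
  refine le_totalChromaticNumber fun k cV cE hc => ?_
  by_contra! hk
  obtain rfl : k = #S + 1 := by
    have := hc.degree_lt 1
    rw [hreg 1] at this
    omega
  have hdeg : ∀ v, (cayleyGraph S).degree v + 1 = #S + 1 := fun v => by rw [hreg v]
  obtain ⟨K, hK⟩ := (cayleyGraph S).exists_isNClique_cliqueNum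
  have hclass : ∀ i, #{v | cV v = i} = 1 := fun i => by
    have hbound := cayleyGraph_card_mul_card_le (hc.isIndepSet_filter_eq i) hK.isClique
    rw [hK.card_eq] at hbound
    have hlt : #{v | cV v = i} < 3 := Nat.lt_of_mul_lt_mul_right (hbound.trans_lt hclique)
    obtain ⟨m, hm⟩ := hc.odd_card_filter_eq hdeg hodd i
    omega
  have hcard : Fintype.card H = #S + 1 := by
    rw [← card_univ, card_eq_sum_card_fiberwise (f := cV) (t := univ) fun _ _ => mem_univ _]
    simp [hclass]
  exact hnc (SimpleGraph.IsRegularOfDegree.eq_top (by rwa [hcard, Nat.add_sub_cancel]))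

theorem cayley_odd_big_clique_not_type_one {H : Type*} [Group H] [Fintype H]
    [DecidableEq H] (S : Finset H)
    (hS1 : (1 : H) ∉ S) (hSsymm : ∀ s ∈ S, s⁻¹ ∈ S)
    (hSgen : Subgroup.closure (S : Set H) = ⊤)
    (hodd : Odd (Fintype.card H))
    (hnc : cayleyGraph S ≠ ⊤)
    (hclique : 3 * (cayleyGraph S).cliqueNum > Fintype.card H) :
    S.card + 2 ≤ totalChromaticNumber (cayleyGraph S) :=
  cayley_odd_big_clique_not_type_one_general S hS1 hSsymm hodd hnc hclique
end

section
/- Let G be a Cayley graph of a finite group H of odd order n with symmetric generating set S (not containing the identity), let Δ = |S|, and suppose G is not a complete graph and its clique number ω satisfies ω > n/3. Then the vertex set of G admits no partition into Δ + 1 independent sets each of odd cardinality (i.e., G has no conformable (Δ+1)-vertex coloring). -/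
open Finset

lemma cayley_adj {H : Type*} [Group H] (S : Finset H) (g h : H) :
    (cayleyGraph S).Adj g h ↔ g ≠ h ∧ (g⁻¹ * h ∈ S ∨ h⁻¹ * g ∈ S) := by
  simp [cayleyGraph, SimpleGraph.fromRel_adj]

/-- Counting lemma: clique times independent set injects into the group. -/
lemma clique_indep_card_le {H : Type*} [Group H] [Fintype H] [DecidableEq H]
    (S : Finset H) (K A : Finset H) (hK : (cayleyGraph S).IsClique (K : Set H))
    (hA : ∀ u ∈ A, ∀ v ∈ A, ¬ (cayleyGraph S).Adj u v) :
    K.card * A.card ≤ Fintype.card H := by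
  classical
  have hinj : Set.InjOn (fun p : H × H => p.1 * p.2⁻¹) ((K ×ˢ A : Finset (H × H)) : Set (H × H)) := by
    rintro ⟨k1, a1⟩ hp1 ⟨k2, a2⟩ hp2 heq
    simp only [Finset.coe_product, Set.mem_prod, Finset.mem_coe] at hp1 hp2
    simp only at heq
    by_cases ha : a1 = a2
    · subst ha
      have : k1 = k2 := by
        have := mul_right_cancel (a := k1) (b := a1⁻¹) (c := k2) heq
        exact this
      simp [this]
    · exfalso
      have hk : k1⁻¹ * k2 = a1⁻¹ * a2 := by
        have : k2 = k1 * a1⁻¹ * a2 := by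
          rw [heq]; group
        rw [this]; group
      have hkne : k1 ≠ k2 := by
        intro h
        apply ha
        have : (1 : H) = a1⁻¹ * a2 := by rw [← hk, h]; group
        have := congrArg (fun x => a1 * x) this
        simpa using this
      have hadj := hK hp1.1 hp2.1 hkne
      rw [cayley_adj] at hadj
      have hnadj := hA a1 hp1.2 a2 hp2.2
      rw [cayley_adj] at hnadj
      apply hnadj
      refine ⟨ha, ?_⟩
      rcases hadj.2 with h | h
      · left; rwa [hk] at h
      · right
        have : k2⁻¹ * k1 = a2⁻¹ * a1 := by
          have := congrArg (fun x => x⁻¹) hk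
          simpa [mul_inv_rev] using this
        rwa [this] at h
  calc K.card * A.card = (K ×ˢ A).card := (Finset.card_product K A).symm
    _ = ((K ×ˢ A).image (fun p : H × H => p.1 * p.2⁻¹)).card :=
        (Finset.card_image_of_injOn hinj).symm
    _ ≤ Fintype.card H := Finset.card_le_univ _

theorem cayley_odd_big_clique_not_conformable {H : Type*} [Group H] [Fintype H]
    [DecidableEq H] (S : Finset H)
    (hS1 : (1 : H) ∉ S) (hSsymm : ∀ s ∈ S, s⁻¹ ∈ S)
    (hSgen : Subgroup.closure (S : Set H) = ⊤)
    (hodd : Odd (Fintype.card H))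
    (hnc : cayleyGraph S ≠ ⊤)
    (hclique : 3 * (cayleyGraph S).cliqueNum > Fintype.card H) :
    ¬ ∃ c : H → Fin (S.card + 1),
        (∀ u v : H, (cayleyGraph S).Adj u v → c u ≠ c v) ∧
        (∀ i : Fin (S.card + 1),
          Odd (Finset.univ.filter (fun v : H => c v = i)).card) := by
  classical
  rintro ⟨c, hc, hoddc⟩
  obtain ⟨K, hK⟩ := (cayleyGraph S).exists_isNClique_cliqueNum
  -- each color class has card 1
  have hclass : ∀ i : Fin (S.card + 1),
      (Finset.univ.filter (fun v : H => c v = i)).card = 1 := by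
    intro i
    set A := Finset.univ.filter (fun v : H => c v = i) with hA
    have hindep : ∀ u ∈ A, ∀ v ∈ A, ¬ (cayleyGraph S).Adj u v := by
      intro u hu v hv hadj
      apply hc u v hadj
      simp only [hA, Finset.mem_filter] at hu hv
      rw [hu.2, hv.2]
    have hle := clique_indep_card_le S K A hK.isClique hindep
    rw [hK.card_eq] at hle
    have h2 : A.card ≤ 2 := by
      by_contra h
      push_neg at h
      have : 3 * (cayleyGraph S).cliqueNum ≤ (cayleyGraph S).cliqueNum * A.card := by
        calc 3 * (cayleyGraph S).cliqueNum ≤ A.card * (cayleyGraph S).cliqueNum :=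
              Nat.mul_le_mul_right _ h
          _ = (cayleyGraph S).cliqueNum * A.card := mul_comm _ _
      omega
    have := hoddc i
    rw [← hA] at this
    obtain ⟨k, hk⟩ := this
    omega
  -- hence card H = S.card + 1
  have hcard : Fintype.card H = S.card + 1 := by
    have := Finset.card_eq_sum_card_fiberwise
      (f := c) (s := Finset.univ) (t := Finset.univ) (fun x _ => Finset.mem_univ _)
    simp only [hclass] at this
    simpa [Finset.card_univ, Fintype.card_fin] using this
  -- then S = univ \ {1}, so the graph is complete, contradiction
  apply hnc
  have hSsub : S ⊆ Finset.univ.erase 1 := by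
    intro s hs
    exact Finset.mem_erase.mpr ⟨fun h => hS1 (h ▸ hs), Finset.mem_univ _⟩
  have hScard : S.card = (Finset.univ.erase 1 : Finset H).card := by
    rw [Finset.card_erase_of_mem (Finset.mem_univ _), Finset.card_univ]
    omega
  have hSeq : S = Finset.univ.erase 1 := Finset.eq_of_subset_of_card_le hSsub (le_of_eq hScard.symm)
  ext g h
  rw [cayley_adj]
  simp only [SimpleGraph.top_adj]
  constructor
  · exact fun hh => hh.1
  · intro hne
    refine ⟨hne, Or.inl ?_⟩
    rw [hSeq]
    refine Finset.mem_erase.mpr ⟨?_, Finset.mem_univ _⟩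
    intro h1
    apply hne
    have := congrArg (fun x => g * x) h1
    simpa using this.symm
end

section
/- Let G be a perfect Cayley graph of a finite group of order n with symmetric generating set S, such that the chromatic number χ(G) is odd and χ(G) divides n. Then G satisfies the Total Coloring Conjecture: its total chromatic number is at most Δ + 2, where Δ = |S| is the degree of G. -/
/-- A graph is perfect if for every induced subgraph the chromatic number equals
the clique number. -/
def IsPerfectGraph {V : Type*} (G : SimpleGraph V) : Prop :=
  ∀ s : Set V, (G.induce s).chromaticNumber = ((G.induce s).cliqueNum : ℕ∞)


/-!
Let `k = χ(G)`. Perfectness gives a `k`-clique `K`; fix a proper colouring `c` with `k` colours.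
Every translate `gK` is again a `k`-clique, so it meets each colour class exactly once. Counting
translates shows that Hall's condition holds between any two colour classes, so any two classes
are joined by a perfect matching of `G`. On the union `M` of these matchings, `c` together with
the edge colouring `uv ↦ (c u + c v) / 2` in `ℤ/k` (`k` is odd) is a total colouring with `k`
colours. The remaining graph `G \ M` has maximum degree at most `|S| - (k - 1)`, so by Vizing's
theorem its edges need only `|S| - k + 2` further colours.
-/

namespace SimpleGraph

variable {V : Type*}

theorem exists_adj_of_mem_edgeSet {G : SimpleGraph V} {e : Sym2 V} {v : V}
    (he : e ∈ G.edgeSet) (hv : v ∈ e) : ∃ w, G.Adj v w ∧ e = s(v, w) := by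
  obtain ⟨w, rfl⟩ := Sym2.mem_iff_exists.1 hv
  exact ⟨w, he, rfl⟩

theorem degree_sdiff_of_le [Fintype V] [DecidableEq V] {G M : SimpleGraph V}
    [DecidableRel G.Adj] [DecidableRel M.Adj] (h : M ≤ G) (v : V) :
    (G \ M).degree v = G.degree v - M.degree v := by
  rw [← card_neighborFinset_eq_degree, neighborFinset_sdiff, Finset.card_sdiff_of_subset
    fun w hw => (mem_neighborFinset _ _ _).2 (h ((mem_neighborFinset _ _ _).1 hw))]
  simp

/-! ### Vizing's theorem -/

variable (G : SimpleGraph V) {N : ℕ}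

/-- Partial edge colourings are maps `Sym2 V → Option (Fin N)`, `none` marking an uncoloured
edge. -/
def IsProperPartialEdgeColoring (f : Sym2 V → Option (Fin N)) : Prop :=
  ∀ ⦃u v w : V⦄ ⦃c : Fin N⦄, G.Adj u v → G.Adj u w →
    f s(u, v) = some c → f s(u, w) = some c → v = w

def IsMissingAt (f : Sym2 V → Option (Fin N)) (v : V) (c : Fin N) : Prop :=
  ∀ w, G.Adj v w → f s(v, w) ≠ some c

variable {G} {f : Sym2 V → Option (Fin N)} {u v x y : V} {a b c d : Fin N}

theorem exists_isMissingAt [Fintype V] [DecidableRel G.Adj] (f : Sym2 V → Option (Fin N))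
    (h : G.degree v < N) : ∃ c, G.IsMissingAt f v c := by
  by_contra! hall
  simp only [IsMissingAt, not_forall, not_not] at hall
  choose w hw hwc using hall
  have hinj : Function.Injective w := fun c c' h =>
    Option.some_injective _ ((hwc c).symm.trans (h ▸ hwc c'))
  have := Finset.card_le_card_of_injOn (s := Finset.univ) w
    (fun c _ => (G.mem_neighborFinset v _).2 (hw c)) hinj.injOn
  simp only [Finset.card_univ, Fintype.card_fin, card_neighborFinset_eq_degree] at this
  omega

section Update

variable [DecidableEq V] {e : Sym2 V} {o : Option (Fin N)}

theorem IsMissingAt.update (h : G.IsMissingAt f v c) (ho : o ≠ some c) :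
    G.IsMissingAt (Function.update f e o) v c := by
  intro w hvw
  rw [Function.update_apply]
  split_ifs
  exacts [ho, h w hvw]

theorem IsMissingAt.update_of_notMem (h : G.IsMissingAt f v c) (hv : v ∉ e) :
    G.IsMissingAt (Function.update f e o) v c := by
  intro w hvw
  rw [Function.update_of_ne fun he : s(v, w) = e => hv (he ▸ Sym2.mem_mk_left v w)]
  exact h w hvw

namespace IsProperPartialEdgeColoring

theorem update_none (hf : G.IsProperPartialEdgeColoring f) (e : Sym2 V) :
    G.IsProperPartialEdgeColoring (Function.update f e none) := by
  intro u v w c huv huw hv hw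
  rw [Function.update_apply] at hv hw
  split_ifs at hv hw
  exact hf huv huw hv hw

theorem update_some (hf : G.IsProperPartialEdgeColoring f) (hx : G.IsMissingAt f x c)
    (hy : G.IsMissingAt f y c) :
    G.IsProperPartialEdgeColoring (Function.update f s(x, y) (some c)) := by
  have missing : ∀ {u v}, s(u, v) = s(x, y) → G.IsMissingAt f u c := fun h => by
    rcases Sym2.mem_iff.1 (h ▸ Sym2.mem_mk_left _ _) with rfl | rfl
    exacts [hx, hy]
  intro u v w c' huv huw hv hw
  rw [Function.update_apply] at hv hw
  split_ifs at hv hw with hev hew hew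
  · exact Sym2.congr_right.1 (hev.trans hew.symm)
  · exact absurd (Option.some_inj.1 hv ▸ hw) (missing hev w huw)
  · exact absurd (Option.some_inj.1 hw ▸ hv) (missing hew v huv)
  · exact hf huv huw hv hw

theorem isMissingAt_update_none (hf : G.IsProperPartialEdgeColoring f) (hxy : G.Adj x y)
    (h : f s(x, y) = some c) : G.IsMissingAt (Function.update f s(x, y) none) x c := by
  intro w hxw hw
  rw [Function.update_apply] at hw
  split_ifs at hw with he
  exact he (by rw [hf hxw hxy hw h])

end IsProperPartialEdgeColoring

end Update

section Kempe

variable (G) in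
def kempeGraph (f : Sym2 V → Option (Fin N)) (a b : Fin N) : SimpleGraph V where
  Adj u v := G.Adj u v ∧ (f s(u, v) = some a ∨ f s(u, v) = some b)
  symm := ⟨fun u v h => ⟨h.1.symm, by rw [Sym2.eq_swap]; exact h.2⟩⟩
  loopless := ⟨fun v h => G.loopless.irrefl v h.1⟩

variable (G) in
noncomputable def kempeSwap (f : Sym2 V → Option (Fin N)) (a b : Fin N) (x : V) :
    Sym2 V → Option (Fin N) := by
  classical
  exact fun e => if ∃ v ∈ e, (G.kempeGraph f a b).Reachable x v then
    (f e).map (Equiv.swap a b) else f e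

theorem kempeSwap_apply_of_reachable (h : (G.kempeGraph f a b).Reachable x u) (v : V) :
    G.kempeSwap f a b x s(u, v) = (f s(u, v)).map (Equiv.swap a b) := by
  simp only [kempeSwap]
  rw [if_pos ⟨u, Sym2.mem_mk_left u v, h⟩]

theorem kempeSwap_apply_of_not_reachable (h : ¬ (G.kempeGraph f a b).Reachable x u)
    (huv : G.Adj u v) : G.kempeSwap f a b x s(u, v) = f s(u, v) := by
  simp only [kempeSwap]
  split_ifs with hr
  · obtain ⟨w, hw, hxw⟩ := hr
    rcases Sym2.mem_iff.1 hw with rfl | rfl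
    · exact absurd hxw h
    -- `v` lies on the chain but `u` does not, so `uv` is not a chain edge
    have hab : f s(u, w) ≠ some a ∧ f s(u, w) ≠ some b := by
      rw [← not_or]
      exact fun hc => h (hxw.trans (Adj.reachable ⟨huv.symm, by rwa [Sym2.eq_swap]⟩))
    cases hc : f s(u, w) with
    | none => rfl
    | some c =>
      rw [hc, Ne, Option.some_inj, Ne, Option.some_inj] at hab
      simp [Equiv.swap_apply_of_ne_of_ne hab.1 hab.2]
  · rfl

theorem kempeSwap_eq_none_iff {e : Sym2 V} :
    G.kempeSwap f a b x e = none ↔ f e = none := by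
  simp only [kempeSwap]
  split_ifs <;> simp

theorem IsProperPartialEdgeColoring.kempeSwap (hf : G.IsProperPartialEdgeColoring f) :
    G.IsProperPartialEdgeColoring (G.kempeSwap f a b x) := by
  intro u v w c huv huw hv hw
  by_cases hu : (G.kempeGraph f a b).Reachable x u
  · rw [kempeSwap_apply_of_reachable hu] at hv hw
    obtain ⟨c₀, hv₀, -⟩ := Option.map_eq_some_iff.1 hv
    have hvw := Option.map_injective (Equiv.swap a b).injective (hv.trans hw.symm)
    exact hf huv huw hv₀ (hvw ▸ hv₀)
  · rw [kempeSwap_apply_of_not_reachable hu huv] at hv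
    rw [kempeSwap_apply_of_not_reachable hu huw] at hw
    exact hf huv huw hv hw

theorem IsMissingAt.kempeSwap_of_reachable (h : G.IsMissingAt f u c)
    (hu : (G.kempeGraph f a b).Reachable x u) :
    G.IsMissingAt (G.kempeSwap f a b x) u (Equiv.swap a b c) := by
  intro w huw hw
  rw [kempeSwap_apply_of_reachable hu, Option.map_eq_some_iff] at hw
  obtain ⟨c₀, hc₀, hswap⟩ := hw
  exact h w huw ((Equiv.swap a b).injective hswap ▸ hc₀)

theorem IsMissingAt.kempeSwap_of_not_reachable (h : G.IsMissingAt f u c)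
    (hu : ¬ (G.kempeGraph f a b).Reachable x u) : G.IsMissingAt (G.kempeSwap f a b x) u c :=
  fun w huw => by rw [kempeSwap_apply_of_not_reachable hu huw]; exact h w huw

theorem IsProperPartialEdgeColoring.kempeGraph_eq_or_eq_or_eq
    (hf : G.IsProperPartialEdgeColoring f) {z₁ z₂ z₃ : V} (h₁ : (G.kempeGraph f a b).Adj u z₁)
    (h₂ : (G.kempeGraph f a b).Adj u z₂)
    (h₃ : (G.kempeGraph f a b).Adj u z₃) : z₁ = z₂ ∨ z₁ = z₃ ∨ z₂ = z₃ := by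
  rcases h₁.2 with e₁ | e₁ <;> rcases h₂.2 with e₂ | e₂ <;> rcases h₃.2 with e₃ | e₃ <;>
  first
  | exact Or.inl (hf h₁.1 h₂.1 e₁ e₂)
  | exact Or.inr (Or.inl (hf h₁.1 h₃.1 e₁ e₃))
  | exact Or.inr (Or.inr (hf h₂.1 h₃.1 e₂ e₃))

theorem IsProperPartialEdgeColoring.kempeGraph_neighborSet_subsingleton
    (hf : G.IsProperPartialEdgeColoring f) (h : G.IsMissingAt f u a ∨ G.IsMissingAt f u b) :
    ((G.kempeGraph f a b).neighborSet u).Subsingleton := by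
  intro z hz z' hz'
  rcases h with h | h
  · exact hf hz.1 hz'.1 (hz.2.resolve_left (h z hz.1)) (hz'.2.resolve_left (h z' hz'.1))
  · exact hf hz.1 hz'.1 (hz.2.resolve_right (h z hz.1)) (hz'.2.resolve_right (h z' hz'.1))

end Kempe

section MaxDegreeTwo

variable {Γ : SimpleGraph V}

theorem Walk.IsPath.exists_adj_adj_of_mem_support {w z : V} {p : Γ.Walk v w} (hp : p.IsPath)
    (hz : z ∈ p.support) (hzv : z ≠ v) (hzw : z ≠ w) :
    ∃ z₁ z₂, z₁ ≠ z₂ ∧ Γ.Adj z z₁ ∧ Γ.Adj z z₂ ∧ z₁ ∈ p.support ∧ z₂ ∈ p.support := by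
  induction p with
  | nil => exact absurd (Walk.mem_support_nil_iff.1 hz) hzv
  | @cons v v₁ w h q ih =>
    rw [Walk.support_cons, List.mem_cons] at hz
    rw [Walk.cons_isPath_iff] at hp
    rcases hz with rfl | hz
    · exact absurd rfl hzv
    by_cases hzv₁ : z = v₁
    · subst hzv₁
      cases q with
      | nil => exact absurd rfl hzw
      | cons h' q' =>
        refine ⟨v, _, fun h'' => hp.2 ?_, h.symm, h', by simp, by simp⟩
        simp [h'']
    · obtain ⟨z₁, z₂, hne, h₁, h₂, hm₁, hm₂⟩ := ih hp.1 hz hzv₁ hzw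
      exact ⟨z₁, z₂, hne, h₁, h₂, by simp [hm₁], by simp [hm₂]⟩

theorem Walk.IsPath.mem_support_of_reachable
    (hdeg : ∀ u z₁ z₂ z₃, Γ.Adj u z₁ → Γ.Adj u z₂ → Γ.Adj u z₃ → z₁ = z₂ ∨ z₁ = z₃ ∨ z₂ = z₃)
    {w : V} (hvw : v ≠ w) {p : Γ.Walk v w} (hp : p.IsPath) (hv : (Γ.neighborSet v).Subsingleton)
    (hw : (Γ.neighborSet w).Subsingleton) (hu : Γ.Reachable v u) : u ∈ p.support := by
  have closed : ∀ z ∈ p.support, ∀ z', Γ.Adj z z' → z' ∈ p.support := by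
    intro z hz z' hzz'
    by_cases hzv : z = v
    · subst hzv
      cases p with
      | nil => exact absurd rfl hvw
      | cons h q => rw [hv hzz' h]; simp
    by_cases hzw : z = w
    · subst hzw
      cases hq : p.reverse with
      | nil => exact absurd rfl hvw
      | cons h q =>
        rw [← List.mem_reverse, ← Walk.support_reverse, hq, hw hzz' h]
        simp
    obtain ⟨z₁, z₂, hne, h₁, h₂, hm₁, hm₂⟩ := hp.exists_adj_adj_of_mem_support hz hzv hzw
    rcases hdeg z z' z₁ z₂ hzz' h₁ h₂ with rfl | rfl | rfl
    exacts [hm₁, hm₂, absurd rfl hne]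
  have along : ∀ {s t : V} (q : Γ.Walk s t), s ∈ p.support → t ∈ p.support := by
    intro s t q
    induction q with
    | nil => exact id
    | cons h q ih => exact fun hs => ih (closed _ hs _ h)
  exact along hu.some p.start_mem_support

/-- A connected component of a graph of maximum degree at most two (`hdeg`) contains at most two
vertices of degree at most one. -/
theorem eq_or_eq_or_eq_of_reachable
    (hdeg : ∀ u z₁ z₂ z₃, Γ.Adj u z₁ → Γ.Adj u z₂ → Γ.Adj u z₃ → z₁ = z₂ ∨ z₁ = z₃ ∨ z₂ = z₃)
    {w : V} (hx : (Γ.neighborSet x).Subsingleton) (hv : (Γ.neighborSet v).Subsingleton)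
    (hw : (Γ.neighborSet w).Subsingleton) (hxv : Γ.Reachable x v) (hxw : Γ.Reachable x w) :
    x = v ∨ x = w ∨ v = w := by
  classical
  by_contra! hne
  obtain ⟨hxv', hxw', hvw⟩ := hne
  obtain ⟨q⟩ := hxv.symm.trans hxw
  have hp := q.toPath.2
  have hx_mem := hp.mem_support_of_reachable hdeg hvw hv hw hxv.symm
  obtain ⟨z₁, z₂, hz, h₁, h₂, -, -⟩ := hp.exists_adj_adj_of_mem_support hx_mem hxv' hxw'
  exact hz (hx h₁ h₂)

end MaxDegreeTwo

section Fan

variable (G) in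
structure IsFan (f : Sym2 V → Option (Fin N)) (x : V) (ys : ℕ → V) (m : ℕ) : Prop where
  adj : ∀ i ≤ m, G.Adj x (ys i)
  injOn : Set.InjOn ys (Set.Iic m)
  uncolored : f s(x, ys 0) = none
  missing : ∀ i < m, ∃ c, f s(x, ys (i + 1)) = some c ∧ G.IsMissingAt f (ys i) c

namespace IsFan

variable {ys : ℕ → V} {m i j : ℕ}

theorem mono (h : G.IsFan f x ys m) {m' : ℕ} (hm : m' ≤ m) : G.IsFan f x ys m' :=
  ⟨fun i hi => h.adj i (hi.trans hm), h.injOn.mono (Set.Iic_subset_Iic.2 hm), h.uncolored,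
    fun i hi => h.missing i (hi.trans_le hm)⟩

theorem mk_ne (h : G.IsFan f x ys m) (hi : i ≤ m) (hj : j ≤ m) (hij : i ≠ j) :
    s(x, ys i) ≠ s(x, ys j) :=
  fun he => hij (h.injOn hi hj (Sym2.congr_right.1 he))

theorem notMem (h : G.IsFan f x ys m) (hi : i ≤ m) (hj : j ≤ m) (hij : i ≠ j) :
    ys i ∉ s(x, ys j) := by
  rw [Sym2.mem_iff, not_or]
  exact ⟨(G.ne_of_adj (h.adj i hi)).symm, fun he => hij (h.injOn hi hj he)⟩

/-- Shifting colours down the fan and giving the last edge the colour `d` colours `x (ys 0)`. -/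
theorem exists_extension [DecidableEq V] (hf : G.IsProperPartialEdgeColoring f)
    (h : G.IsFan f x ys m) (hx : G.IsMissingAt f x d) (hy : G.IsMissingAt f (ys m) d) :
    ∃ f' : Sym2 V → Option (Fin N), G.IsProperPartialEdgeColoring f' ∧
      (∀ e, f e ≠ none → f' e ≠ none) ∧ f' s(x, ys 0) ≠ none := by
  induction m generalizing f ys with
  | zero =>
    refine ⟨Function.update f s(x, ys 0) (some d), hf.update_some hx hy, fun e he => ?_, by simp⟩
    rw [Function.update_apply]
    split_ifs <;> simp [he]
  | succ m ih =>
    obtain ⟨c, hc, hcy⟩ := h.missing 0 m.succ_pos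
    have hcd : c ≠ d := fun hcd => hx _ (h.adj 1 (by omega)) (hcd ▸ hc)
    have h01 : s(x, ys 0) ≠ s(x, ys 1) := h.mk_ne (by omega) (by omega) (by omega)
    set f₁ := Function.update (Function.update f s(x, ys 1) none) s(x, ys 0) (some c)
    have hf₁ : G.IsProperPartialEdgeColoring f₁ :=
      (hf.update_none _).update_some (hf.isMissingAt_update_none (h.adj 1 (by omega)) hc)
        (hcy.update (by simp))
    have hfan₁ : G.IsFan f₁ x (ys ∘ (· + 1)) m := by
      refine ⟨fun i hi => h.adj (i + 1) (by omega), fun i hi j hj hij => ?_, ?_, fun i hi => ?_⟩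
      · simpa using h.injOn (show i + 1 ≤ m + 1 by simp at hi; omega)
          (show j + 1 ≤ m + 1 by simp at hj; omega) hij
      · simp [f₁, h01.symm]
      · obtain ⟨c', hc', hc'y⟩ := h.missing (i + 1) (by omega)
        refine ⟨c', ?_, (hc'y.update (by simp)).update_of_notMem
          (h.notMem (by omega) (by omega) (by omega))⟩
        simp [f₁, h.mk_ne (i := i + 1 + 1) (j := 0) (by omega) (by omega) (by omega),
          h.mk_ne (i := i + 1 + 1) (j := 1) (by omega) (by omega) (by omega), hc']
    obtain ⟨f', hf', hext, hcol⟩ := ih hf₁ hfan₁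
      ((hx.update (by simp)).update (by simpa using hcd))
      ((hy.update (by simp)).update_of_notMem (h.notMem (by omega) (by omega) (by omega)))
    refine ⟨f', hf', fun e he => ?_, hext _ (by simp [f₁])⟩
    by_cases he₁ : e = s(x, ys 1)
    · exact he₁ ▸ hcol
    · apply hext
      simp only [f₁, Function.update_apply, he₁, if_false]
      split_ifs <;> simp [he]

theorem kempeSwap (h : G.IsFan f x ys m) (hx : G.IsMissingAt f x a)
    (hb : ∀ i < m, f s(x, ys (i + 1)) = some b → (G.kempeGraph f a b).Reachable x (ys i)) :
    G.IsFan (G.kempeSwap f a b x) x ys m := by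
  refine ⟨h.adj, h.injOn, ?_, fun i hi => ?_⟩
  · rw [kempeSwap_apply_of_reachable (Reachable.refl x), h.uncolored, Option.map_none]
  obtain ⟨c, hc, hcy⟩ := h.missing i hi
  have hca : c ≠ a := fun hca => hx _ (h.adj _ (by omega)) (hca ▸ hc)
  refine ⟨Equiv.swap a b c, by rw [kempeSwap_apply_of_reachable (Reachable.refl x), hc]; rfl, ?_⟩
  by_cases hr : (G.kempeGraph f a b).Reachable x (ys i)
  · exact hcy.kempeSwap_of_reachable hr
  · have hcb : c ≠ b := fun hcb => hr (hb i hi (hcb ▸ hc))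
    rw [Equiv.swap_apply_of_ne_of_ne hca hcb]
    exact hcy.kempeSwap_of_not_reachable hr

end IsFan

/-- A fan that cannot be prolonged. -/
theorem exists_maximal_isFan [Fintype V] (hxy : G.Adj x y) (hnone : f s(x, y) = none) :
    ∃ (ys : ℕ → V) (m : ℕ), ys 0 = y ∧ G.IsFan f x ys m ∧
      ∀ z c, G.Adj x z → f s(x, z) = some c → G.IsMissingAt f (ys m) c →
        ∃ i ≤ m, z = ys i := by
  classical
  set lengths := {m | ∃ ys : ℕ → V, ys 0 = y ∧ G.IsFan f x ys m}
  have hzero : 0 ∈ lengths :=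
    ⟨fun _ => y, rfl, fun _ _ => hxy, fun i hi j hj _ => by simp_all, hnone, by simp⟩
  have hbdd : BddAbove lengths := by
    refine ⟨Fintype.card V, fun m ⟨ys, _, h⟩ => ?_⟩
    have := Finset.card_le_card_of_injOn (s := Finset.range (m + 1)) (t := Finset.univ) ys
      (by simp) (h.injOn.mono fun i hi => by simp at hi ⊢; omega)
    simp only [Finset.card_range, Finset.card_univ] at this
    omega
  set M := sSup lengths
  obtain ⟨ys, hy, h⟩ := Nat.sSup_mem ⟨0, hzero⟩ hbdd
  refine ⟨ys, M, hy, h, fun z c hxz hc hcM => ?_⟩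
  by_contra! hz
  have hlong : M + 1 ∈ lengths := by
    refine ⟨fun i => if i ≤ M then ys i else z, by simp [hy], ⟨fun i hi => ?_, ?_, ?_, ?_⟩⟩
    · split_ifs
      exacts [h.adj i ‹_›, hxz]
    · intro i hi j hj hij
      simp only [Set.mem_Iic] at hi hj
      dsimp only at hij
      split_ifs at hij with h₁ h₂ h₂
      exacts [h.injOn h₁ h₂ hij, absurd hij.symm (hz i h₁), absurd hij (hz j h₂), by omega]
    · simpa using h.uncolored
    · intro i hi
      by_cases hiM : i + 1 ≤ M
      · simpa [hiM, show i ≤ M by omega] using h.missing i (by omega)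
      · obtain rfl : i = M := by omega
        simpa using ⟨c, hc, hcM⟩
  exact (le_csSup hbdd hlong).not_gt (Nat.lt_succ_self M)

end Fan

/-- The colour `d` is used at `x` on the fan edge `x (ys t)`. After swapping `c` and `d` on the
chain through `x`, either the whole fan or its part before `ys t` ends at a vertex missing `d`. -/
theorem IsFan.exists_isFan_kempeSwap {ys : ℕ → V} {m t : ℕ}
    (hf : G.IsProperPartialEdgeColoring f) (hfan : G.IsFan f x ys m) (hc : G.IsMissingAt f x c)
    (hd : G.IsMissingAt f (ys m) d) (htm : t ≤ m) (htd : f s(x, ys t) = some d) :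
    ∃ m', G.IsFan (G.kempeSwap f c d x) x ys m' ∧
      G.IsMissingAt (G.kempeSwap f c d x) (ys m') d := by
  have ht₀ : t ≠ 0 := by rintro rfl; simp [hfan.uncolored] at htd
  have htm' : t ≠ m := by rintro rfl; exact hd x (hfan.adj t htm).symm (by rwa [Sym2.eq_swap])
  obtain ⟨d', hd', hdt⟩ := hfan.missing (t - 1) (by omega)
  rw [Nat.sub_add_cancel (by omega), htd, Option.some_inj] at hd'
  subst hd'
  have only_t : ∀ i < m, f s(x, ys (i + 1)) = some d → i + 1 = t := fun i hi h =>
    hfan.injOn (show i + 1 ≤ m by omega) htm (hf (hfan.adj _ (by omega)) (hfan.adj t htm) h htd)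
  by_cases hreach : (G.kempeGraph f c d).Reachable x (ys (t - 1))
  · -- the chain through `x` ends at `ys (t - 1)`, so it misses `ys m`
    have hm : ¬ (G.kempeGraph f c d).Reachable x (ys m) := fun hm => by
      rcases eq_or_eq_or_eq_of_reachable (fun _ _ _ _ => hf.kempeGraph_eq_or_eq_or_eq)
        (hf.kempeGraph_neighborSet_subsingleton (Or.inl hc))
        (hf.kempeGraph_neighborSet_subsingleton (Or.inr hdt))
        (hf.kempeGraph_neighborSet_subsingleton (Or.inr hd)) hreach hm with h | h | h
      · exact G.ne_of_adj (hfan.adj _ (by omega)) h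
      · exact G.ne_of_adj (hfan.adj _ le_rfl) h
      · exact absurd (hfan.injOn (show t - 1 ≤ m by omega) (show m ≤ m from le_rfl) h)
          (by omega)
    refine ⟨m, hfan.kempeSwap hc fun i hi h => ?_, hd.kempeSwap_of_not_reachable hm⟩
    rwa [show i = t - 1 by have := only_t i hi h; omega]
  · refine ⟨t - 1, (hfan.mono (by omega)).kempeSwap hc fun i hi h => ?_,
      hdt.kempeSwap_of_not_reachable hreach⟩
    exact absurd (only_t i (by omega) h) (by omega)

variable [Fintype V] [DecidableEq V] [DecidableRel G.Adj]

theorem IsProperPartialEdgeColoring.exists_extension (hdeg : ∀ v, G.degree v < N)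
    (hf : G.IsProperPartialEdgeColoring f) (hxy : G.Adj x y) (hnone : f s(x, y) = none) :
    ∃ f' : Sym2 V → Option (Fin N), G.IsProperPartialEdgeColoring f' ∧
      (∀ e, f e ≠ none → f' e ≠ none) ∧ f' s(x, y) ≠ none := by
  obtain ⟨ys, m, rfl, hfan, hmax⟩ := exists_maximal_isFan hxy hnone
  obtain ⟨c, hc⟩ := exists_isMissingAt f (hdeg x)
  obtain ⟨d, hd⟩ := exists_isMissingAt f (hdeg (ys m))
  by_cases hdx : G.IsMissingAt f x d
  · exact hfan.exists_extension hf hdx hd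
  obtain ⟨z, hxz, hzd⟩ : ∃ z, G.Adj x z ∧ f s(x, z) = some d := by
    simpa [IsMissingAt] using hdx
  obtain ⟨t, htm, rfl⟩ := hmax z d hxz hzd hd
  obtain ⟨m', hfan', hdm'⟩ := hfan.exists_isFan_kempeSwap hf hc hd htm hzd
  have hdx' : G.IsMissingAt (G.kempeSwap f c d x) x d := by
    simpa using hc.kempeSwap_of_reachable (a := c) (b := d) (Reachable.refl x)
  obtain ⟨f', hf', hext, hcol⟩ := hfan'.exists_extension hf.kempeSwap hdx' hdm'
  exact ⟨f', hf', fun e he => hext e (by rwa [Ne, kempeSwap_eq_none_iff]), hcol⟩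

theorem exists_isProperPartialEdgeColoring_ne_none (hdeg : ∀ v, G.degree v < N) :
    ∃ f : Sym2 V → Option (Fin N), G.IsProperPartialEdgeColoring f ∧
      ∀ e ∈ G.edgeSet, f e ≠ none := by
  suffices ∀ n (f : Sym2 V → Option (Fin N)), G.IsProperPartialEdgeColoring f →
      (G.edgeFinset.filter (f · = none)).card = n →
      ∃ f : Sym2 V → Option (Fin N), G.IsProperPartialEdgeColoring f ∧
        ∀ e ∈ G.edgeSet, f e ≠ none from
    this _ (fun _ => none) (fun _ _ _ _ _ _ h => by simp at h) rfl
  intro n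
  induction n using Nat.strong_induction_on with
  | _ n ih =>
  intro f hf hn
  by_cases hall : ∀ e ∈ G.edgeSet, f e ≠ none
  · exact ⟨f, hf, hall⟩
  push Not at hall
  obtain ⟨e, he, hfe⟩ := hall
  induction e using Sym2.ind with
  | _ x y =>
  obtain ⟨f', hf', hext, hcol⟩ := hf.exists_extension hdeg he hfe
  refine ih _ (hn ▸ Finset.card_lt_card ⟨fun e' => ?_, fun hsub => ?_⟩) f' hf' rfl
  · simp only [Finset.mem_filter]
    exact fun h => ⟨h.1, not_not.1 fun h' => hext e' h' h.2⟩
  · have := hsub (Finset.mem_filter.2 ⟨(mem_edgeFinset).2 he, hfe⟩)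
    exact hcol (Finset.mem_filter.1 this).2

/-- Vizing's theorem. -/
theorem lineGraph_colorable_of_forall_degree_lt (hdeg : ∀ v, G.degree v < N) :
    G.lineGraph.Colorable N := by
  obtain ⟨f, hf, hcol⟩ := exists_isProperPartialEdgeColoring_ne_none hdeg
  choose col hcol using fun e : G.edgeSet => Option.ne_none_iff_exists'.1 (hcol e e.2)
  refine ⟨Coloring.mk col fun {e e'} hadj heq => ?_⟩
  obtain ⟨hne, v, hv, hv'⟩ := lineGraph_adj_iff_exists.1 hadj
  obtain ⟨w, hvw, hw⟩ := exists_adj_of_mem_edgeSet e.2 hv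
  obtain ⟨w', hvw', hw'⟩ := exists_adj_of_mem_edgeSet e'.2 hv'
  have h₁ := hcol e
  have h₂ := hcol e'
  rw [heq, hw] at h₁
  rw [hw'] at h₂
  exact hne (Subtype.ext (by rw [hw, hw', hf hvw hvw' h₁ h₂]))

end SimpleGraph

open SimpleGraph Finset

/-! ### Total colourings from matchings between colour classes -/

section TotalColoring

variable {V : Type*} {k N : ℕ}

/-- The edges of `G \ M` get the colours `k, …, k + N - 1`. -/
theorem totalChromaticNumber_le_add {G M : SimpleGraph V} {cV : V → Fin k}
    {cM : M.edgeSet → Fin k} (hM : IsTotalColoring M cV cM)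
    (hV : ∀ u v, G.Adj u v → cV u ≠ cV v) (hB : (G \ M).lineGraph.Colorable N) :
    totalChromaticNumber G ≤ k + N := by
  classical
  obtain ⟨cB⟩ := hB
  have mem_sdiff (e : G.edgeSet) (h : (e : Sym2 V) ∉ M.edgeSet) :
      (e : Sym2 V) ∈ (G \ M).edgeSet := by
    rw [edgeSet_sdiff]
    exact ⟨e.2, h⟩
  let cE : G.edgeSet → Fin (k + N) := fun e =>
    if h : (e : Sym2 V) ∈ M.edgeSet then Fin.castAdd N (cM ⟨e, h⟩)
    else Fin.natAdd k (cB ⟨e, mem_sdiff e h⟩)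
  have castAdd_ne_natAdd (i : Fin k) (j : Fin N) : Fin.castAdd N i ≠ Fin.natAdd k j := by
    simp [Fin.ext_iff]; omega
  refine Nat.sInf_le ⟨fun v => Fin.castAdd N (cV v), cE, fun u v h => by simpa using hV u v h,
    fun e f hef hx => ?_, fun e v hv => ?_⟩
  · simp only [cE]
    split_ifs with he hf hf
    · simpa using hM.2.1 ⟨e, he⟩ ⟨f, hf⟩ (fun h => hef (Subtype.ext (Subtype.mk.inj h))) hx
    · exact castAdd_ne_natAdd _ _
    · exact (castAdd_ne_natAdd _ _).symm
    · have := cB.valid ((lineGraph_adj_iff_exists (e₁ := ⟨e, mem_sdiff e he⟩)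
        (e₂ := ⟨f, mem_sdiff f hf⟩)).2 ⟨fun h => hef (Subtype.ext (Subtype.mk.inj h)), hx⟩)
      simpa using this
  · simp only [cE]
    split_ifs with he
    · simpa using hM.2.2 ⟨e, he⟩ v hv
    · exact (castAdd_ne_natAdd _ _).symm

open Fin.CommRing in
/-- The edge `uv` gets the colour `(c u + c v) / 2` in `ℤ/k`. -/
theorem exists_isTotalColoring_of_odd {M : SimpleGraph V} (hk : Odd k) {c : V → Fin k}
    (hc : ∀ u v, M.Adj u v → c u ≠ c v) (hinj : ∀ u, Set.InjOn c (M.neighborSet u)) :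
    ∃ cE : M.edgeSet → Fin k, IsTotalColoring M c cE := by
  obtain ⟨m, rfl⟩ := hk
  set half : Fin (2 * m + 1) := ((m + 1 : ℕ) : Fin (2 * m + 1))
  have two_mul_half : 2 * half = 1 := by
    have : ((2 * (m + 1) : ℕ) : Fin (2 * m + 1)) = 1 := by
      rw [show 2 * (m + 1) = (2 * m + 1) + 1 by ring]
      simp
    simpa [half] using this
  have cancel {x y : Fin (2 * m + 1)} (h : x * half = y * half) : x = y := by
    calc x = x * half * 2 := by rw [mul_assoc, mul_comm half, two_mul_half, mul_one]
      _ = y := by rw [h, mul_assoc, mul_comm half, two_mul_half, mul_one]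
  let col : Sym2 V → Fin (2 * m + 1) := Sym2.lift ⟨fun u v => (c u + c v) * half,
    fun u v => by simp only [add_comm]⟩
  refine ⟨fun e => col e, hc, fun e f hef ⟨x, hxe, hxf⟩ heq => ?_, fun e v hv heq => ?_⟩
  · obtain ⟨p, hxp, he⟩ := exists_adj_of_mem_edgeSet e.2 hxe
    obtain ⟨q, hxq, hf⟩ := exists_adj_of_mem_edgeSet f.2 hxf
    have hpq := hinj x hxp hxq (add_left_cancel (cancel (by simpa [col, he, hf] using heq)))
    exact hef (Subtype.ext (by rw [he, hf, hpq]))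
  · obtain ⟨p, hvp, he⟩ := exists_adj_of_mem_edgeSet e.2 hv
    refine hc v p hvp (add_left_cancel (a := c v) (cancel ?_)).symm
    have h2 : c v = (c v + c v) * half := by
      rw [← two_mul, mul_assoc, mul_comm (c v) half, ← mul_assoc, two_mul_half, one_mul]
    simpa [col, he, ← h2] using heq

/-- Gluing perfect matchings between any two colour classes. -/
theorem exists_le_existsUnique_adj_of_bijOn {G : SimpleGraph V} {c : V → Fin k}
    (h : ∀ a b, a < b → ∃ f : V → V, Set.BijOn f {v | c v = a} {v | c v = b} ∧
      ∀ v, c v = a → G.Adj v (f v)) :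
    ∃ M ≤ G, ∀ v j, j ≠ c v → ∃! w, M.Adj v w ∧ c w = j := by
  have h' (a b : Fin k) : ∃ f : V → V, a < b → Set.BijOn f {v | c v = a} {v | c v = b} ∧
      ∀ v, c v = a → G.Adj v (f v) := by
    by_cases hab : a < b
    · exact (h a b hab).imp fun f hf _ => hf
    · exact ⟨id, fun h => absurd h hab⟩
  choose f hf using h'
  refine ⟨fromRel fun u v => c u < c v ∧ f (c u) (c v) u = v, ?_, fun v j hj => ?_⟩
  · rintro u v ⟨-, ⟨hlt, huv⟩ | ⟨hlt, hvu⟩⟩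
    · have := (hf _ _ hlt).2 u rfl
      rwa [huv] at this
    · have := (hf _ _ hlt).2 v rfl
      rw [hvu] at this
      exact this.symm
  rcases lt_or_gt_of_ne hj with hlt | hlt
  · obtain ⟨hbij, hadj⟩ := hf j (c v) hlt
    obtain ⟨w, hw : c w = j, hwv⟩ := hbij.surjOn (show c v = c v from rfl)
    have hne := G.ne_of_adj (hadj w hw)
    rw [hwv] at hne
    refine ⟨w, ⟨⟨hne.symm, Or.inr ⟨hw ▸ hlt, by rw [hw]; exact hwv⟩⟩, hw⟩, ?_⟩
    rintro w' ⟨⟨-, ⟨hlt', -⟩ | ⟨-, hw'v⟩⟩, hw'⟩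
    · exact absurd (hw' ▸ hlt') hlt.not_gt
    · rw [hw'] at hw'v
      exact hbij.injOn hw' hw (hw'v.trans hwv.symm)
  · obtain ⟨hbij, hadj⟩ := hf (c v) j hlt
    have hcol : c (f (c v) j v) = j := hbij.mapsTo (show c v = c v from rfl)
    refine ⟨f (c v) j v, ⟨⟨G.ne_of_adj (hadj v rfl), Or.inl ⟨by rwa [hcol], by rw [hcol]⟩⟩, hcol⟩,
      ?_⟩
    rintro w' ⟨⟨-, ⟨-, hvw'⟩ | ⟨hlt', -⟩⟩, hw'⟩
    · rw [hw'] at hvw'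
      exact hvw'.symm
    · exact absurd (hw' ▸ hlt') hlt.not_gt

theorem injOn_neighborSet_of_existsUnique {M : SimpleGraph V} {c : V → Fin k}
    (hc : ∀ u v, M.Adj u v → c u ≠ c v) (hM : ∀ v j, j ≠ c v → ∃! w, M.Adj v w ∧ c w = j)
    (u : V) : Set.InjOn c (M.neighborSet u) :=
  fun v hv _ hw h => (hM u (c v) (hc u v hv).symm).unique ⟨hv, rfl⟩ ⟨hw, h.symm⟩

theorem le_degree_of_existsUnique [Fintype V] {M : SimpleGraph V} [DecidableRel M.Adj]
    {c : V → Fin k} (hM : ∀ v j, j ≠ c v → ∃! w, M.Adj v w ∧ c w = j) (v : V) :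
    k - 1 ≤ M.degree v := by
  classical
  calc k - 1 = #(univ.erase (c v)) := by simp
    _ ≤ #((M.neighborFinset v).image c) := card_le_card fun j hj => by
      obtain ⟨w, ⟨hw, rfl⟩, -⟩ := hM v j (ne_of_mem_erase hj)
      exact mem_image_of_mem c ((mem_neighborFinset _ _ _).2 hw)
    _ ≤ M.degree v := card_image_le

end TotalColoring

theorem IsPerfectGraph.chromaticNumber_eq_cliqueNum {V : Type*} [Finite V] {G : SimpleGraph V}
    (h : IsPerfectGraph G) : G.chromaticNumber = G.cliqueNum := by
  refine le_antisymm ?_ G.cliqueNum_le_chromaticNumber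
  rw [← chromaticNumber_congr G.induceUnivIso, h Set.univ]
  exact_mod_cast G.cliqueNum_induce_le Set.univ

/-! ### Colour classes of Cayley graphs -/

section Cayley

variable {H : Type*} [Group H] {S : Finset H}

theorem cayleyGraph_eq_mulCayley (S : Finset H) : cayleyGraph S = mulCayley (S : Set H) := by
  ext u v
  simp [cayleyGraph, mulCayley_adj]

theorem cayleyGraph_adj_mul_iff {g u v : H} :
    (cayleyGraph S).Adj (g * u) (g * v) ↔ (cayleyGraph S).Adj u v := by
  rw [cayleyGraph_eq_mulCayley]
  exact mulCayley_adj_mul_iff_right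

theorem degree_cayleyGraph_le [Fintype H] [DecidableEq H] [DecidableRel (cayleyGraph S).Adj]
    (hS : ∀ s ∈ S, s⁻¹ ∈ S) (v : H) : (cayleyGraph S).degree v ≤ #S := by
  rw [← card_neighborFinset_eq_degree]
  refine (card_le_card fun w hw => ?_).trans (card_image_le (f := (v * ·)))
  rw [mem_neighborFinset, cayleyGraph, fromRel_adj] at hw
  obtain ⟨-, h | h⟩ := hw
  · exact mem_image.2 ⟨_, h, by group⟩
  · exact mem_image.2 ⟨_, by simpa using hS _ h, by group⟩

theorem card_filter_inv_mul_mem [Fintype H] [DecidableEq H] (K : Finset H) (v : H) :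
    #{g | g⁻¹ * v ∈ K} = #K :=
  card_nbij' (fun g => g⁻¹ * v) (fun x => v * x⁻¹) (fun g hg => by simpa using hg)
    (fun x hx => by simpa [mul_assoc] using hx) (fun g _ => by simp)
    (fun x _ => by simp [mul_assoc])

section Translate

variable {k : ℕ} {K : Finset H} (hK : (cayleyGraph S).IsNClique k K)
  (c : (cayleyGraph S).Coloring (Fin k))
include hK

theorem adj_of_inv_mul_mem {g w w' : H} (hw : g⁻¹ * w ∈ K) (hw' : g⁻¹ * w' ∈ K)
    (hne : w ≠ w') :
    (cayleyGraph S).Adj w w' := by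
  simpa using cayleyGraph_adj_mul_iff (g := g) |>.2 (hK.isClique hw hw' (by simpa using hne))

theorem eq_of_inv_mul_mem {g w w' : H} (hw : g⁻¹ * w ∈ K) (hw' : g⁻¹ * w' ∈ K)
    (hc : c w = c w') : w = w' :=
  not_not.1 fun hne => c.valid (adj_of_inv_mul_mem hK hw hw' hne) hc

theorem exists_inv_mul_mem_color_eq (g : H) (j : Fin k) : ∃ w, g⁻¹ * w ∈ K ∧ c w = j := by
  have hsurj := surjOn_of_injOn_of_card_le (s := K) (t := univ) (fun x => c (g * x))
    (fun _ _ => mem_coe.2 (mem_univ _))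
    (fun x hx x' hx' h => mul_left_cancel (eq_of_inv_mul_mem hK c (g := g) (by simpa using hx)
      (by simpa using hx') h))
    (by simp [hK.card_eq])
  obtain ⟨x, hx, hxj⟩ := hsurj (mem_coe.2 (mem_univ j))
  exact ⟨g * x, by simpa using hx, hxj⟩

variable [Fintype H] [DecidableEq H]

/-- Each translate `gK` contains exactly one vertex of a given colour, so the translates meeting
a set `Y` of vertices of one colour are counted by the disjoint fibres `{g | g⁻¹ y ∈ K}`. -/
theorem card_filter_exists_inv_mul_mem {a : Fin k} {Y : Finset H} (hY : ∀ y ∈ Y, c y = a) :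
    #{g | ∃ y ∈ Y, g⁻¹ * y ∈ K} = k * #Y := by
  have hunion : ({g | ∃ y ∈ Y, g⁻¹ * y ∈ K} : Finset H) =
      Y.biUnion fun y => {g | g⁻¹ * y ∈ K} := by
    ext g
    simp
  rw [hunion, card_biUnion, sum_congr rfl fun y _ => card_filter_inv_mul_mem K y, hK.card_eq,
    sum_const, smul_eq_mul, mul_comm]
  intro y hy y' hy' hne
  refine disjoint_filter.2 fun g _ h h' => hne ?_
  exact eq_of_inv_mul_mem hK c h h' ((hY y hy).trans (hY y' hy').symm)

theorem card_colorClass_mul (a : Fin k) : k * #{v | c v = a} = Fintype.card H := by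
  rw [← card_filter_exists_inv_mul_mem hK c (a := a) (Y := {v | c v = a}) (by simp), ← card_univ]
  congr 1
  ext g
  obtain ⟨w, hw, hwa⟩ := exists_inv_mul_mem_color_eq hK c g a
  simpa using ⟨w, hwa, hw⟩

/-- Hall's condition for the edges between two colour classes. -/
theorem card_le_card_biUnion_adj [DecidableRel (cayleyGraph S).Adj] {a b : Fin k} (hab : a ≠ b)
    (A : Finset {v // c v = a}) :
    #A ≤ #(A.biUnion fun x => {w | c w = b ∧ (cayleyGraph S).Adj x w}) := by
  set X := A.map (Function.Embedding.subtype _)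
  set Z := A.biUnion fun x => ({w | c w = b ∧ (cayleyGraph S).Adj x w} : Finset H)
  suffices k * #X ≤ k * #Z by simpa [X] using Nat.le_of_mul_le_mul_left this a.pos
  rw [← card_filter_exists_inv_mul_mem hK c (a := a) (Y := X)
      fun y hy => by obtain ⟨x, -, rfl⟩ := mem_map.1 hy; exact x.2,
    ← card_filter_exists_inv_mul_mem hK c (a := b) (Y := Z) (by simp +contextual [Z])]
  refine card_le_card fun g => ?_
  simp only [mem_filter, mem_univ, true_and]
  rintro ⟨x, hxX, hx⟩
  obtain ⟨w, hw, hwb⟩ := exists_inv_mul_mem_color_eq hK c g b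
  obtain ⟨x', hx'A, rfl⟩ := mem_map.1 hxX
  refine ⟨w, mem_biUnion.2 ⟨x', hx'A, ?_⟩, hw⟩
  simp only [mem_filter, mem_univ, true_and]
  refine ⟨hwb, adj_of_inv_mul_mem hK hx hw fun h => hab ?_⟩
  rw [← x'.2, ← hwb]
  exact congrArg c h

theorem exists_bijOn_colorClass [DecidableRel (cayleyGraph S).Adj] {a b : Fin k} (hab : a ≠ b) :
    ∃ f : H → H, Set.BijOn f {v | c v = a} {v | c v = b} ∧
      ∀ v, c v = a → (cayleyGraph S).Adj v (f v) := by
  obtain ⟨f, hf, hft⟩ := (all_card_le_biUnion_card_iff_exists_injective _).1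
    (card_le_card_biUnion_adj hK c hab)
  have hft' (x : {v // c v = a}) : c (f x) = b ∧ (cayleyGraph S).Adj x (f x) := by
    simpa using hft x
  let φ : H → H := fun v => if h : c v = a then f ⟨v, h⟩ else v
  have hφ (v : H) (h : c v = a) : φ v = f ⟨v, h⟩ := dif_pos h
  have maps : Set.MapsTo φ {v | c v = a} {v | c v = b} := fun v (h : c v = a) => by
    rw [Set.mem_ofPred_eq, hφ v h]
    exact (hft' _).1
  have inj : Set.InjOn φ {v | c v = a} := fun v (h : c v = a) v' (h' : c v' = a) he => by
    rw [hφ v h, hφ v' h'] at he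
    exact congrArg Subtype.val (hf he)
  have hcard : #{v | c v = b} ≤ #{v | c v = a} :=
    (Nat.eq_of_mul_eq_mul_left a.pos
      ((card_colorClass_mul hK c b).trans (card_colorClass_mul hK c a).symm)).le
  have surj := surjOn_of_injOn_of_card_le (s := {v | c v = a}) (t := {v | c v = b}) φ
    (by simpa using maps) (by simpa using inj) hcard
  refine ⟨φ, ⟨maps, inj, by simpa using surj⟩, fun v h => ?_⟩
  rw [hφ v h]
  exact (hft' ⟨v, h⟩).2

end Translate

end Cayley

theorem perfect_cayley_tcc_general {H : Type*} [Group H] [Fintype H] [DecidableEq H]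
    (S : Finset H)
    (hSsymm : ∀ s ∈ S, s⁻¹ ∈ S)
    (hperf : IsPerfectGraph (cayleyGraph S))
    (hodd : Odd (cayleyGraph S).chromaticNumber.toNat) :
    totalChromaticNumber (cayleyGraph S) ≤ S.card + 2 := by
  classical
  obtain ⟨K, hK⟩ : ∃ K, (cayleyGraph S).IsNClique (cayleyGraph S).chromaticNumber.toNat K := by
    simpa [hperf.chromaticNumber_eq_cliqueNum] using (cayleyGraph S).exists_isNClique_cliqueNum
  obtain ⟨c⟩ := (cayleyGraph S).colorable_chromaticNumber_of_fintype
  generalize (cayleyGraph S).chromaticNumber.toNat = k at hK c hodd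
  obtain ⟨M, hMG, hM⟩ := exists_le_existsUnique_adj_of_bijOn fun a b hab =>
    exists_bijOn_colorClass hK c hab.ne
  have hc (u v : H) (h : M.Adj u v) : c u ≠ c v := c.valid (hMG h)
  obtain ⟨cM, hcM⟩ :=
    exists_isTotalColoring_of_odd hodd hc (injOn_neighborSet_of_existsUnique hc hM)
  have hdeg (v : H) : k ≤ S.card + 1 ∧ (cayleyGraph S \ M).degree v < S.card + 2 - k := by
    have := le_degree_of_existsUnique hM v
    have := degree_le_of_le (v := v) hMG
    have := degree_cayleyGraph_le hSsymm v
    have := degree_sdiff_of_le hMG v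
    have := hodd.pos
    omega
  calc totalChromaticNumber (cayleyGraph S)
      ≤ k + (S.card + 2 - k) := totalChromaticNumber_le_add hcM (fun _ _ => c.valid)
        (lineGraph_colorable_of_forall_degree_lt fun v => (hdeg v).2)
    _ = S.card + 2 := by have := (hdeg 1).1; omega

theorem perfect_cayley_tcc {H : Type*} [Group H] [Fintype H] [DecidableEq H]
    (S : Finset H)
    (hS1 : (1 : H) ∉ S) (hSsymm : ∀ s ∈ S, s⁻¹ ∈ S)
    (hSgen : Subgroup.closure (S : Set H) = ⊤)
    (hperf : IsPerfectGraph (cayleyGraph S))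
    (hodd : Odd (cayleyGraph S).chromaticNumber.toNat)
    (hdvd : (cayleyGraph S).chromaticNumber.toNat ∣ Fintype.card H) :
    totalChromaticNumber (cayleyGraph S) ≤ S.card + 2 :=
  perfect_cayley_tcc_general S hSsymm hperf hodd
end
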